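/- arXiv:1911.02342 — 7 statements merged into one kernel-verified Lean document; each statement's English description precedes it below -/
import Mathlib

section
/- Principle of meromorphic continuation: Let M be a nonempty connected open subset of ℂ^N and let E be a complex Banach space. Let ι be an index set and, for each i ∈ ι, let F_i be a complex Banach space, let μ_i : M → (E →L[ℂ] F_i) be analytic, and let c_i : M → F_i be analytic. For s ∈ M set Sol(s) = {v ∈ E : μ_i(s) v = c_i(s) for all i ∈ ι}. Assume the family of systems is locally of finite type: for every s₀ ∈ M there exist an open neighborhood W ⊆ M of s₀, an integer k ≥ 0 and analytic maps e_1, …, e_k : W → E such that Sol(s) ⊆ span_ℂ{e_1(s), …, e_k(s)} for every s ∈ W. Let M_unq = {s ∈ M : Sol(s) has exactly one element}, and for s ∈ M_unq let v(s) denote that element. If the interior of M_unq is nonempty, then there exists an open dense subset U of M with U ⊆ M_unq such that v is analytic at every point of U, and v is meromorphic on M in the following sense: for every s₀ ∈ M there exist a connected open neighborhood W of s₀ in M, an analytic function g : W → ℂ that is not identically zero, and an analytic map h : W → E, such that g(s)·v(s) = h(s) for all s ∈ U ∩ W. -/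
/-!
Near a point of `M`, every solution is `T(s) a = ∑ⱼ aⱼ eⱼ(s)` with `a ∈ ℂᵏ`, and testing the
equations against continuous functionals turns the system into a family of scalar linear
equations in the `k` unknowns with analytic coefficients. Off the zero set of three maximal
minors (an open dense set) three ranks are constant: that of the coefficient rows, that of the
augmented rows, and that of the coefficient rows together with the rows `q ∘ T(s)`,
`q ∈ E'`, which cut out `ker T(s)`. Unique solvability means that the three ranks agree, so on
that dense set it holds either everywhere or nowhere, and where it holds Cramer's rule for a
nonvanishing minor `g` writes `v = g⁻¹ • h` with `g`, `h` analytic. Overlapping charts agree on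
which alternative occurs, so connectedness of `M` propagates the good one from the interior of
`M_unq` to all of `M`.
-/

open Set Submodule Module Matrix Filter Topology

section MaximalMinor

variable {K X : Type*} [Field K] [AddCommGroup X] [Module K X] {r : ℕ}

def pairingMatrix (f : Fin r → Dual K X) (u : Fin r → X) : Matrix (Fin r) (Fin r) K :=
  Matrix.of fun a b => f a (u b)

theorem pairingMatrix_mulVec (f : Fin r → Dual K X) (u : Fin r → X) (w : Fin r → K) :
    pairingMatrix f u *ᵥ w = fun a => f a (Fintype.linearCombination K u w) := by
  ext a
  simp [pairingMatrix, Matrix.mulVec, dotProduct, Fintype.linearCombination_apply, mul_comm]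

theorem linearIndependent_of_det_pairingMatrix_ne_zero {f : Fin r → Dual K X} {u : Fin r → X}
    (h : (pairingMatrix f u).det ≠ 0) : LinearIndependent K f := by
  have hrows := Matrix.linearIndependent_rows_iff_isUnit.2
    ((Matrix.isUnit_iff_isUnit_det _).2 h.isUnit)
  exact hrows.of_comp (LinearMap.pi fun b => Dual.eval K X (u b))

theorem LinearIndependent.exists_pairingMatrix_eq_one [FiniteDimensional K X]
    {f : Fin r → Dual K X} (hf : LinearIndependent K f) :
    ∃ u : Fin r → X, pairingMatrix f u = 1 := by
  choose ψ hψ using fun b => LinearMap.exists_extend ((Finsupp.lapply b).comp hf.repr)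
  refine ⟨fun b => (evalEquiv K X).symm (ψ b), ?_⟩
  ext a b
  have := LinearMap.congr_fun (hψ b) ⟨f a, subset_span (mem_range_self a)⟩
  rw [LinearMap.comp_apply, LinearMap.comp_apply, hf.repr_eq_single a _ rfl] at this
  simpa [pairingMatrix, Matrix.one_apply, Finsupp.single_apply] using this

theorem exists_maximal_minor [FiniteDimensional K X] {S P : Type*} {B : Set S} (hB : B.Nonempty)
    (A : P → S → Dual K X) :
    ∃ (r : ℕ) (idx : Fin r → P) (u : Fin r → X),
      (∃ s ∈ B, (pairingMatrix (fun a => A (idx a) s) u).det ≠ 0) ∧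
      ∀ s ∈ B, (pairingMatrix (fun a => A (idx a) s) u).det ≠ 0 →
        finrank K (span K (range fun p => A p s)) = r := by
  set R := {n | ∃ s ∈ B, ∃ idx : Fin n → P, LinearIndependent K fun a => A (idx a) s}
  have hR : R.Nonempty := let ⟨s, hs⟩ := hB; ⟨0, s, hs, Fin.elim0, linearIndependent_empty_type⟩
  have hRbdd : BddAbove R := by
    refine ⟨finrank K (Dual K X), ?_⟩
    rintro n ⟨s, -, idx, h⟩
    simpa using h.fintype_card_le_finrank
  obtain ⟨s₀, hs₀, idx, hidx⟩ := Nat.sSup_mem hR hRbdd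
  obtain ⟨u, hu⟩ := hidx.exists_pairingMatrix_eq_one
  refine ⟨_, idx, u, ⟨s₀, hs₀, by simp [hu]⟩, fun s hs hdet => ?_⟩
  have hind := linearIndependent_of_det_pairingMatrix_ne_zero hdet
  suffices span K (range fun p => A p s) = span K (range fun a => A (idx a) s) by
    rw [this, finrank_span_eq_card hind, Fintype.card_fin]
  refine le_antisymm (span_le.2 ?_) (span_mono (range_comp_subset_range idx (A · s)))
  rintro _ ⟨p, rfl⟩
  by_contra hp
  have hsnoc : LinearIndependent K ((A · s) ∘ Fin.snoc (α := fun _ => P) idx p) := by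
    rw [Fin.comp_snoc]
    exact linearIndependent_finSnoc.2 ⟨hind, hp⟩
  have := le_csSup hRbdd ⟨s, hs, _, hsnoc⟩
  omega

end MaximalMinor

theorem Module.Dual.apply_eq_zero_of_mem_span {K V ι : Type*} [Field K] [AddCommGroup V]
    [Module K V] {g : ι → Dual K V} {f : Dual K V} (hf : f ∈ span K (range g)) {v : V}
    (hg : ∀ i, g i v = 0) : f v = 0 :=
  (span_le (p := LinearMap.ker (Dual.eval K V v))).2 (range_subset_iff.2 hg) hf

theorem forall_mem_span_iff_finrank_span_sum_elim_le {K V P Q : Type*} [Field K] [AddCommGroup V]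
    [Module K V] [FiniteDimensional K V] (x : P → V) (z : Q → V) :
    (∀ q, z q ∈ span K (range x)) ↔
      finrank K (span K (range (Sum.elim x z))) ≤ finrank K (span K (range x)) := by
  have hle : span K (range x) ≤ span K (range (Sum.elim x z)) :=
    span_mono (by simp [Sum.elim_range])
  constructor
  · intro hz
    refine finrank_mono (span_le.2 ?_)
    rw [Sum.elim_range]
    exact union_subset subset_span (range_subset_iff.2 hz)
  · intro h q
    rw [eq_of_le_of_finrank_le hle h]
    exact subset_span ⟨Sum.inr q, rfl⟩

section LinearSystem

variable {𝕜 E X ι : Type*} [RCLike 𝕜] [NormedAddCommGroup E] [NormedSpace 𝕜 E]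
  {F : ι → Type*} [∀ i, NormedAddCommGroup (F i)] [∀ i, NormedSpace 𝕜 (F i)]
  [AddCommGroup X] [Module 𝕜 X]
  (μ : ∀ i, E →L[𝕜] F i) (c : ∀ i, F i) (T : X →ₗ[𝕜] E)

/-- For `p = ⟨i, l⟩`, the equation `l (μ i (T a)) = l (c i)` homogenized in `(a, t)`. -/
def homogeneousRow (p : Σ i, StrongDual 𝕜 (F i)) : Dual 𝕜 (X × 𝕜) :=
  (p.2 : F p.1 →ₗ[𝕜] 𝕜) ∘ₗ ((μ p.1 : E →ₗ[𝕜] F p.1) ∘ₗ T ∘ₗ LinearMap.fst 𝕜 X 𝕜 -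
    (LinearMap.snd 𝕜 X 𝕜).smulRight (c p.1))

@[simp]
theorem homogeneousRow_apply (p : Σ i, StrongDual 𝕜 (F i)) (y : X × 𝕜) :
    homogeneousRow μ c T p y = p.2 (μ p.1 (T y.1) - y.2 • c p.1) := by
  simp [homogeneousRow]

def coeffRow (p : Σ i, StrongDual 𝕜 (F i)) : Dual 𝕜 X :=
  (LinearMap.inl 𝕜 X 𝕜).dualMap (homogeneousRow μ c T p)

@[simp]
theorem coeffRow_apply (p : Σ i, StrongDual 𝕜 (F i)) (a : X) :
    coeffRow μ c T p a = p.2 (μ p.1 (T a)) := by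
  simp [coeffRow]

/-- The coefficient rows together with the forms `q ∘ T`, whose common kernel is `ker T`. -/
def coeffAndKerRow : (Σ i, StrongDual 𝕜 (F i)) ⊕ StrongDual 𝕜 E → Dual 𝕜 X :=
  Sum.elim (coeffRow μ c T) fun q => T.dualMap q

variable {r : ℕ} (idx : Fin r → Σ i, StrongDual 𝕜 (F i)) (u : Fin r → X)

def minorDet : 𝕜 :=
  (pairingMatrix (fun a => coeffRow μ c T (idx a)) u).det

/-- Cramer's solution of the equations `idx` in the unknowns spanned by `u`, scaled by the
minor `minorDet`. -/
def cramerSolution : X :=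
  Fintype.linearCombination 𝕜 u
    (cramer (pairingMatrix (fun a => coeffRow μ c T (idx a)) u) fun a => (idx a).2 (c (idx a).1))

variable {μ c T}

theorem mem_solutions_iff_homogeneousRow {a : X} :
    T a ∈ {x | ∀ i, μ i x = c i} ↔ ∀ p, homogeneousRow μ c T p (a, 1) = 0 := by
  simp only [mem_ofPred_eq, homogeneousRow_apply, one_smul, Sigma.forall]
  refine forall_congr' fun i => ?_
  rw [← sub_eq_zero, SeparatingDual.eq_zero_iff_forall_dual_eq_zero (R := 𝕜)]

theorem homogeneousRow_add_coeffRow (p : Σ i, StrongDual 𝕜 (F i)) (a b : X) (t : 𝕜) :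
    homogeneousRow μ c T p (a + b, t) = homogeneousRow μ c T p (a, t) + coeffRow μ c T p b := by
  simp [sub_add_eq_add_sub]

theorem finrank_span_homogeneousRow_le {a : X} (ha : ∀ p, homogeneousRow μ c T p (a, 1) = 0) :
    finrank 𝕜 (span 𝕜 (range (homogeneousRow μ c T))) ≤
      finrank 𝕜 (span 𝕜 (range (coeffRow μ c T))) := by
  set W := span 𝕜 (range (homogeneousRow μ c T))
  set ρ := (LinearMap.inl 𝕜 X 𝕜).dualMap
  -- a form in `W` vanishes at `(a, 1)`, so it is determined by its restriction to `X × {0}`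
  have hinj : Function.Injective (ρ.domRestrict W) := by
    refine (injective_iff_map_eq_zero _).2 fun ⟨f, hf⟩ hρf => ?_
    have hfa : f (a, 1) = 0 := Dual.apply_eq_zero_of_mem_span hf ha
    have hρ : ∀ b, f (b, 0) = 0 := fun b => LinearMap.congr_fun hρf b
    refine Subtype.ext (LinearMap.ext fun ⟨b, t⟩ => ?_)
    have : (b, t) = (b - t • a, 0) + t • (a, 1) := by ext <;> simp
    rw [this, map_add, map_smul, hρ, hfa, smul_zero, add_zero]
    rfl
  have hmap : W.map ρ = span 𝕜 (range (coeffRow μ c T)) := by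
    rw [map_span, ← range_comp]
    rfl
  rw [← LinearMap.finrank_range_of_inj hinj, LinearMap.range_domRestrict, hmap]

theorem finrank_le_of_existsUnique [FiniteDimensional 𝕜 X]
    (hsol : {x | ∀ i, μ i x = c i} ⊆ range T) (huniq : ∃! x, ∀ i, μ i x = c i) :
    finrank 𝕜 (span 𝕜 (range (homogeneousRow μ c T))) ≤
        finrank 𝕜 (span 𝕜 (range (coeffRow μ c T))) ∧
      finrank 𝕜 (span 𝕜 (range (coeffAndKerRow μ c T))) ≤
        finrank 𝕜 (span 𝕜 (range (coeffRow μ c T))) := by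
  obtain ⟨_, hx, hxu⟩ := huniq
  obtain ⟨a₀, rfl⟩ := hsol hx
  have ha₀ := mem_solutions_iff_homogeneousRow.1 hx
  refine ⟨finrank_span_homogeneousRow_le ha₀,
    (forall_mem_span_iff_finrank_span_sum_elim_le _ _).1 fun q => ?_⟩
  refine FiniteDimensional.mem_span_of_iInf_ker_le_ker fun b hb => ?_
  have hb : ∀ p, coeffRow μ c T p b = 0 := fun p => (mem_iInf _).1 hb p
  have hsol' : T (a₀ + b) ∈ {x | ∀ i, μ i x = c i} :=
    mem_solutions_iff_homogeneousRow.2 fun p => by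
      rw [homogeneousRow_add_coeffRow, ha₀, hb, add_zero]
  have : T b = 0 := by simpa using hxu _ hsol'
  simp [this]

theorem eq_of_homogeneousRow_eq_zero
    (hker : ∀ q : StrongDual 𝕜 E, T.dualMap q ∈ span 𝕜 (range (coeffRow μ c T))) {a b : X}
    (ha : ∀ p, homogeneousRow μ c T p (a, 1) = 0) (hb : ∀ p, homogeneousRow μ c T p (b, 1) = 0) :
    T a = T b := by
  rw [← sub_eq_zero, ← map_sub]
  refine SeparatingDual.eq_zero_of_forall_dual_eq_zero (R := 𝕜) fun q =>
    Dual.apply_eq_zero_of_mem_span (hker q) fun p => ?_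
  have := homogeneousRow_add_coeffRow (μ := μ) (c := c) (T := T) p b (a - b) 1
  rwa [add_sub_cancel, ha, hb, zero_add, eq_comm] at this

theorem homogeneousRow_cramerSolution [FiniteDimensional 𝕜 X]
    {idx : Fin r → Σ i, StrongDual 𝕜 (F i)} {u : Fin r → X} (hdet : minorDet μ c T idx u ≠ 0)
    (hrank : finrank 𝕜 (span 𝕜 (range (homogeneousRow μ c T))) ≤ r)
    (p : Σ i, StrongDual 𝕜 (F i)) :
    homogeneousRow μ c T p (cramerSolution μ c T idx u, minorDet μ c T idx u) = 0 := by
  have hind : LinearIndependent 𝕜 fun a => homogeneousRow μ c T (idx a) :=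
    (linearIndependent_of_det_pairingMatrix_ne_zero hdet).of_comp (LinearMap.inl 𝕜 X 𝕜).dualMap
  have hspan : span 𝕜 (range fun a => homogeneousRow μ c T (idx a)) =
      span 𝕜 (range (homogeneousRow μ c T)) :=
    eq_of_le_of_finrank_le (span_mono (range_subset_iff.2 fun a => mem_range_self _))
      (by rwa [finrank_span_eq_card hind, Fintype.card_fin])
  refine Dual.apply_eq_zero_of_mem_span (hspan ▸ subset_span (mem_range_self p)) fun a => ?_
  have := congrFun (mulVec_cramer (pairingMatrix (fun a => coeffRow μ c T (idx a)) u)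
    fun a => (idx a).2 (c (idx a).1)) a
  rw [pairingMatrix_mulVec] at this
  simp only [cramerSolution, minorDet, homogeneousRow_apply, map_sub, map_smul]
  simp only [coeffRow_apply] at this
  rw [this]
  simp

theorem solutions_eq_singleton [FiniteDimensional 𝕜 X] {idx : Fin r → Σ i, StrongDual 𝕜 (F i)}
    {u : Fin r → X} (hsol : {x | ∀ i, μ i x = c i} ⊆ range T) (hdet : minorDet μ c T idx u ≠ 0)
    (hrank : finrank 𝕜 (span 𝕜 (range (homogeneousRow μ c T))) ≤ r)
    (hker : finrank 𝕜 (span 𝕜 (range (coeffAndKerRow μ c T))) ≤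
      finrank 𝕜 (span 𝕜 (range (coeffRow μ c T)))) :
    {x | ∀ i, μ i x = c i} = {(minorDet μ c T idx u)⁻¹ • T (cramerSolution μ c T idx u)} := by
  set d := minorDet μ c T idx u
  have ha₀ : ∀ p, homogeneousRow μ c T p (d⁻¹ • cramerSolution μ c T idx u, 1) = 0 := fun p => by
    have : (d⁻¹ • cramerSolution μ c T idx u, (1 : 𝕜)) = d⁻¹ • (cramerSolution μ c T idx u, d) := by
      simp [hdet]
    rw [this, map_smul, homogeneousRow_cramerSolution hdet hrank, smul_zero]
  rw [← map_smul]
  refine eq_singleton_iff_unique_mem.2 ⟨mem_solutions_iff_homogeneousRow.2 ha₀, fun x hx => ?_⟩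
  obtain ⟨a, rfl⟩ := hsol hx
  exact eq_of_homogeneousRow_eq_zero ((forall_mem_span_iff_finrank_span_sum_elim_le _ _).2 hker)
    (mem_solutions_iff_homogeneousRow.1 hx) ha₀

end LinearSystem

section Analytic

variable {𝕜 G E F : Type*} [NontriviallyNormedField 𝕜] [NormedAddCommGroup G] [NormedSpace 𝕜 G]
  [NormedAddCommGroup E] [NormedSpace 𝕜 E] [NormedAddCommGroup F] [NormedSpace 𝕜 F] {B : Set G}

theorem AnalyticOnNhd.clm_apply {f : G → E →L[𝕜] F} {x : G → E} (hf : AnalyticOnNhd 𝕜 f B)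
    (hx : AnalyticOnNhd 𝕜 x B) : AnalyticOnNhd 𝕜 (fun s => f s (x s)) B := fun s hs =>
  ((ContinuousLinearMap.apply 𝕜 F).flip.analyticAt_bilinear (f s, x s)).comp₂ (hf s hs) (hx s hs)

theorem AnalyticOnNhd.matrix_det {n : Type*} [Fintype n] [DecidableEq n] {M : G → Matrix n n 𝕜}
    (hM : ∀ i j, AnalyticOnNhd 𝕜 (fun s => M s i j) B) :
    AnalyticOnNhd 𝕜 (fun s => (M s).det) B := by
  simp_rw [det_apply, Units.smul_def, zsmul_eq_mul]
  exact Finset.analyticOnNhd_fun_sum _ fun σ _ =>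
    analyticOnNhd_const.mul (Finset.analyticOnNhd_fun_prod _ fun i _ => hM (σ i) i)

theorem AnalyticOnNhd.matrix_cramer {n : Type*} [Fintype n] [DecidableEq n]
    {M : G → Matrix n n 𝕜} (hM : ∀ i j, AnalyticOnNhd 𝕜 (fun s => M s i j) B)
    {y : G → n → 𝕜} (hy : ∀ i, AnalyticOnNhd 𝕜 (fun s => y s i) B) (i : n) :
    AnalyticOnNhd 𝕜 (fun s => cramer (M s) (y s) i) B := by
  simp_rw [cramer_apply]
  refine AnalyticOnNhd.matrix_det fun a b => ?_
  by_cases hb : b = i <;> simp [hb, hM, hy]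

theorem AnalyticOnNhd.det_pairingMatrix {X P : Type*} [AddCommGroup X] [Module 𝕜 X]
    {A : P → G → Dual 𝕜 X} (hA : ∀ p a, AnalyticOnNhd 𝕜 (fun s => A p s a) B) {r : ℕ}
    (idx : Fin r → P) (u : Fin r → X) :
    AnalyticOnNhd 𝕜 (fun s => (pairingMatrix (fun a => A (idx a) s) u).det) B :=
  AnalyticOnNhd.matrix_det fun a b => hA (idx a) (u b)

theorem AnalyticOnNhd.isOpen_ne_zero {f : G → F} (hf : AnalyticOnNhd 𝕜 f B) (hB : IsOpen B) :
    IsOpen {s ∈ B | f s ≠ 0} :=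
  hf.continuousOn.isOpen_inter_preimage hB isOpen_compl_singleton

theorem AnalyticOnNhd.subset_closure_ne_zero {f : G → F} (hf : AnalyticOnNhd 𝕜 f B)
    (hB : IsOpen B) (hBc : IsPreconnected B) (hne : ∃ s ∈ B, f s ≠ 0) :
    B ⊆ closure {s ∈ B | f s ≠ 0} := by
  intro s hs
  by_contra hcl
  obtain ⟨t, htB, ht⟩ := hne
  have hzero : f =ᶠ[𝓝 s] 0 := by
    filter_upwards [hB.mem_nhds hs, Filter.not_frequently.1 (mt mem_closure_iff_frequently.2 hcl)]
      with x hxB hx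
    by_contra hfx
    exact hx ⟨hxB, hfx⟩
  exact ht (hf.eqOn_zero_of_preconnected_of_eventuallyEq_zero hBc hs hzero htB)

theorem AnalyticOnNhd.exists_mul_ne_zero {f g : G → 𝕜} (hf : AnalyticOnNhd 𝕜 f B)
    (hg : AnalyticOnNhd 𝕜 g B) (hB : IsOpen B) (hBc : IsPreconnected B)
    (hfne : ∃ s ∈ B, f s ≠ 0) (hgne : ∃ s ∈ B, g s ≠ 0) : ∃ s ∈ B, f s * g s ≠ 0 := by
  obtain ⟨t, htB, ht⟩ := hgne
  obtain ⟨s, ⟨hsB, hgs⟩, -, hfs⟩ := mem_closure_iff.1 (hf.subset_closure_ne_zero hB hBc hfne htB)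
    _ (hg.isOpen_ne_zero hB) ⟨htB, ht⟩
  exact ⟨s, hsB, mul_ne_zero hfs hgs⟩

theorem AnalyticOnNhd.of_smul_eq {D : Set G} {g : G → 𝕜} {h v : G → E} (hD : IsOpen D)
    (hg : AnalyticOnNhd 𝕜 g D) (hh : AnalyticOnNhd 𝕜 h D) (hg0 : ∀ s ∈ D, g s ≠ 0)
    (heq : ∀ s ∈ D, g s • v s = h s) : AnalyticOnNhd 𝕜 v D := fun s hs =>
  (((hg s hs).inv (hg0 s hs)).smul (hh s hs)).congr <| by
    filter_upwards [hD.mem_nhds hs] with t ht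
    rw [Pi.smul_apply', Pi.inv_apply, ← heq t ht, inv_smul_smul₀ (hg0 t ht)]

end Analytic

section AnalyticSystem

variable {𝕜 G E X ι : Type*} [RCLike 𝕜] [NormedAddCommGroup G] [NormedSpace 𝕜 G]
  [NormedAddCommGroup E] [NormedSpace 𝕜 E]
  {F : ι → Type*} [∀ i, NormedAddCommGroup (F i)] [∀ i, NormedSpace 𝕜 (F i)]
  [AddCommGroup X] [Module 𝕜 X] {B : Set G}
  {μ : ∀ i, G → E →L[𝕜] F i} {c : ∀ i, G → F i} {T : G → X →ₗ[𝕜] E}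

theorem analyticOnNhd_homogeneousRow_apply (hμ : ∀ i, AnalyticOnNhd 𝕜 (μ i) B)
    (hc : ∀ i, AnalyticOnNhd 𝕜 (c i) B) (hT : ∀ a, AnalyticOnNhd 𝕜 (fun s => T s a) B)
    (p : Σ i, StrongDual 𝕜 (F i)) (y : X × 𝕜) :
    AnalyticOnNhd 𝕜 (fun s => homogeneousRow (μ · s) (c · s) (T s) p y) B := by
  simp only [homogeneousRow_apply]
  exact p.2.comp_analyticOnNhd (((hμ p.1).clm_apply (hT y.1)).sub ((hc p.1).const_smul (c := y.2)))

theorem analyticOnNhd_coeffAndKerRow_apply (hμ : ∀ i, AnalyticOnNhd 𝕜 (μ i) B)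
    (hc : ∀ i, AnalyticOnNhd 𝕜 (c i) B) (hT : ∀ a, AnalyticOnNhd 𝕜 (fun s => T s a) B)
    (p : (Σ i, StrongDual 𝕜 (F i)) ⊕ StrongDual 𝕜 E) (a : X) :
    AnalyticOnNhd 𝕜 (fun s => coeffAndKerRow (μ · s) (c · s) (T s) p a) B := by
  rcases p with p | q
  · exact analyticOnNhd_homogeneousRow_apply hμ hc hT p (a, 0)
  · exact q.comp_analyticOnNhd (hT a)

theorem analyticOnNhd_apply_cramerSolution (hμ : ∀ i, AnalyticOnNhd 𝕜 (μ i) B)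
    (hc : ∀ i, AnalyticOnNhd 𝕜 (c i) B) (hT : ∀ a, AnalyticOnNhd 𝕜 (fun s => T s a) B) {r : ℕ}
    (idx : Fin r → Σ i, StrongDual 𝕜 (F i)) (u : Fin r → X) :
    AnalyticOnNhd 𝕜 (fun s => T s (cramerSolution (μ · s) (c · s) (T s) idx u)) B := by
  simp only [cramerSolution, Fintype.linearCombination_apply, map_sum, map_smul]
  refine Finset.analyticOnNhd_fun_sum _ fun b _ => AnalyticOnNhd.smul ?_ (hT (u b))
  refine AnalyticOnNhd.matrix_cramer (fun a b' => ?_) (fun a => ?_) b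
  · exact analyticOnNhd_homogeneousRow_apply hμ hc hT _ (u b', 0)
  · exact (idx a).2.comp_analyticOnNhd (hc _)

theorem exists_generic_solution [FiniteDimensional 𝕜 X] (hBo : IsOpen B) (hBc : IsPreconnected B)
    (hBne : B.Nonempty) (hμ : ∀ i, AnalyticOnNhd 𝕜 (μ i) B) (hc : ∀ i, AnalyticOnNhd 𝕜 (c i) B)
    (hT : ∀ a, AnalyticOnNhd 𝕜 (fun s => T s a) B)
    (hsol : ∀ s ∈ B, {x | ∀ i, μ i s x = c i s} ⊆ range (T s)) :
    ∃ (D : Set G) (g : G → 𝕜) (h : G → E), IsOpen D ∧ D ⊆ B ∧ B ⊆ closure D ∧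
      AnalyticOnNhd 𝕜 g B ∧ AnalyticOnNhd 𝕜 h B ∧ (∀ s ∈ D, g s ≠ 0) ∧
      ((∀ s ∈ D, ¬∃! x, ∀ i, μ i s x = c i s) ∨
        ∀ s ∈ D, {x | ∀ i, μ i s x = c i s} = {(g s)⁻¹ • h s}) := by
  have hrow := analyticOnNhd_homogeneousRow_apply hμ hc hT
  have hcoeff : ∀ p a, AnalyticOnNhd 𝕜 (fun s => coeffRow (μ · s) (c · s) (T s) p a) B :=
    fun p a => hrow p (a, 0)
  obtain ⟨r₁, idx₁, u₁, hne₁, hr₁⟩ :=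
    exists_maximal_minor hBne fun p s => homogeneousRow (μ · s) (c · s) (T s) p
  obtain ⟨r, idx, u, hne, hr⟩ :=
    exists_maximal_minor hBne fun p s => coeffRow (μ · s) (c · s) (T s) p
  obtain ⟨r₃, idx₃, u₃, hne₃, hr₃⟩ :=
    exists_maximal_minor hBne fun p s => coeffAndKerRow (μ · s) (c · s) (T s) p
  have hd₁ := AnalyticOnNhd.det_pairingMatrix hrow idx₁ u₁
  have hg := AnalyticOnNhd.det_pairingMatrix hcoeff idx u
  have hd₃ := AnalyticOnNhd.det_pairingMatrix
    (analyticOnNhd_coeffAndKerRow_apply hμ hc hT) idx₃ u₃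
  have hprod := (hd₁.mul hg).mul hd₃
  have hD := hprod.subset_closure_ne_zero hBo hBc <|
    (hd₁.mul hg).exists_mul_ne_zero hd₃ hBo hBc (hd₁.exists_mul_ne_zero hg hBo hBc hne₁ hne) hne₃
  refine ⟨_, fun s => minorDet (μ · s) (c · s) (T s) idx u, _, hprod.isOpen_ne_zero hBo,
    sep_subset _ _, hD, hg, analyticOnNhd_apply_cramerSolution hμ hc hT idx u,
    fun s hs => right_ne_zero_of_mul (left_ne_zero_of_mul hs.2), ?_⟩
  -- the ranks at one point of unique solvability bound the generic ranks everywhere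
  refine or_iff_not_imp_left.2 fun hgood => ?_
  push Not at hgood
  obtain ⟨sS, ⟨hsSB, hsS⟩, huniq⟩ := hgood
  obtain ⟨h₁, h₃⟩ := finrank_le_of_existsUnique (hsol sS hsSB) huniq
  simp only [mul_ne_zero_iff] at hsS
  rw [hr₁ sS hsSB hsS.1.1, hr sS hsSB hsS.1.2] at h₁
  rw [hr₃ sS hsSB hsS.2, hr sS hsSB hsS.1.2] at h₃
  rintro s ⟨hsB, hs⟩
  simp only [mul_ne_zero_iff] at hs
  refine solutions_eq_singleton (hsol s hsB) hs.1.2 (by rw [hr₁ s hsB hs.1.1]; exact h₁) ?_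
  rw [hr₃ s hsB hs.2, hr s hsB hs.1.2]
  exact h₃

theorem exists_meromorphic_chart {M : Set G}
    (hμ : ∀ i, AnalyticOnNhd 𝕜 (μ i) M) (hc : ∀ i, AnalyticOnNhd 𝕜 (c i) M) {s₀ : G}
    (hfin : ∃ W : Set G, IsOpen W ∧ s₀ ∈ W ∧ W ⊆ M ∧
      ∃ (k : ℕ) (e : Fin k → G → E), (∀ j, AnalyticOnNhd 𝕜 (e j) W) ∧
        ∀ s ∈ W, {x | ∀ i, μ i s x = c i s} ⊆ (span 𝕜 (range fun j => e j s) : Set E)) :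
    ∃ (B D : Set G) (g : G → 𝕜) (h : G → E), IsOpen B ∧ IsConnected B ∧ s₀ ∈ B ∧ B ⊆ M ∧
      IsOpen D ∧ D ⊆ B ∧ B ⊆ closure D ∧
      AnalyticOnNhd 𝕜 g B ∧ AnalyticOnNhd 𝕜 h B ∧ (∀ s ∈ D, g s ≠ 0) ∧
      ((∀ s ∈ D, ¬∃! x, ∀ i, μ i s x = c i s) ∨
        ∀ s ∈ D, {x | ∀ i, μ i s x = c i s} = {(g s)⁻¹ • h s}) := by
  obtain ⟨W, hWo, hs₀, hWM, k, e, he, hspan⟩ := hfin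
  obtain ⟨ε, hε, hball⟩ := Metric.isOpen_iff.1 hWo s₀ hs₀
  have hB : IsConnected (Metric.ball s₀ ε) :=
    letI := NormedSpace.restrictScalars ℝ 𝕜 G
    (convex_ball s₀ ε).isConnected (Metric.nonempty_ball.2 hε)
  have hT : ∀ a : Fin k → 𝕜, AnalyticOnNhd 𝕜 (fun s => Fintype.linearCombination 𝕜 (e · s) a)
      (Metric.ball s₀ ε) := fun a => by
    simp only [Fintype.linearCombination_apply]
    exact Finset.analyticOnNhd_fun_sum _ fun j _ => ((he j).mono hball).const_smul
  obtain ⟨D, g, h, hD⟩ := exists_generic_solution Metric.isOpen_ball hB.isPreconnected hB.nonempty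
    (fun i => (hμ i).mono (hball.trans hWM)) (fun i => (hc i).mono (hball.trans hWM)) hT
    fun s hs => by
      simpa only [← LinearMap.coe_range, Fintype.range_linearCombination] using hspan s (hball hs)
  exact ⟨_, D, g, h, Metric.isOpen_ball, hB, Metric.mem_ball_self hε, hball.trans hWM, hD⟩

end AnalyticSystem

theorem IsPreconnected.forall_subset_of_subset_or_disjoint {α : Type*} [TopologicalSpace α]
    {M X : Set α} (hM : IsPreconnected M) {B D : α → Set α} (hBo : ∀ s ∈ M, IsOpen (B s))
    (hsB : ∀ s ∈ M, s ∈ B s) (hDo : ∀ s ∈ M, IsOpen (D s)) (hBD : ∀ s ∈ M, B s ⊆ closure (D s))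
    (hdich : ∀ s ∈ M, D s ⊆ X ∨ Disjoint (D s) X) (hX : (M ∩ interior X).Nonempty) :
    ∀ s ∈ M, D s ⊆ X := by
  have hsub : ∀ s ∈ M, ∀ z ∈ D s, z ∈ X → D s ⊆ X := fun s hs z hzD hzX =>
    (hdich s hs).resolve_right (not_disjoint_iff.2 ⟨z, hzD, hzX⟩)
  have hiff : ∀ x ∈ M, ∀ y ∈ M, y ∈ B x → (D x ⊆ X ↔ D y ⊆ X) := by
    intro x hx y hy hyx
    obtain ⟨z, hzy, hzx⟩ := mem_closure_iff.1 (hBD x hx hyx) _ (hBo y hy) (hsB y hy)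
    obtain ⟨w, hwx, hwy⟩ := mem_closure_iff.1 (hBD y hy hzy) _ (hDo x hx) hzx
    exact ⟨fun h => hsub y hy w hwy (h hwx), fun h => hsub x hx w hwx (h hwy)⟩
  obtain ⟨p, hpM, hpX⟩ := hX
  obtain ⟨z, hzX, hzD⟩ := mem_closure_iff.1 (hBD p hpM (hsB p hpM)) _ isOpen_interior hpX
  intro s hs
  refine (hM.induction₂ (fun x y => D x ⊆ X ↔ D y ⊆ X) (fun x hx => ?_)
    (fun _ _ _ _ _ _ => Iff.trans) (fun _ _ _ _ => Iff.symm) hpM hs).1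
    (hsub p hpM z hzD (interior_subset hzX))
  filter_upwards [self_mem_nhdsWithin, mem_nhdsWithin_of_mem_nhds ((hBo x hx).mem_nhds (hsB x hx))]
    with y hyM hyB
  exact hiff x hx y hyM hyB

theorem stmt_0_general {N : ℕ} {M : Set (Fin N → ℂ)}
    (hMconn : IsConnected M)
    {E : Type*} [NormedAddCommGroup E] [NormedSpace ℂ E]
    {ι : Type*} {F : ι → Type*} [∀ i, NormedAddCommGroup (F i)] [∀ i, NormedSpace ℂ (F i)]
    (μ : ∀ i : ι, (Fin N → ℂ) → (E →L[ℂ] F i)) (c : ∀ i : ι, (Fin N → ℂ) → F i)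
    (hμ : ∀ i, AnalyticOnNhd ℂ (μ i) M) (hc : ∀ i, AnalyticOnNhd ℂ (c i) M)
    (Sol : (Fin N → ℂ) → Set E)
    (hSol : ∀ s, Sol s = {x : E | ∀ i, μ i s x = c i s})
    -- the family of systems is locally of finite type
    (hfin : ∀ s₀ ∈ M, ∃ W : Set (Fin N → ℂ), IsOpen W ∧ s₀ ∈ W ∧ W ⊆ M ∧
      ∃ (k : ℕ) (e : Fin k → (Fin N → ℂ) → E),
        (∀ j, AnalyticOnNhd ℂ (e j) W) ∧
        ∀ s ∈ W, Sol s ⊆ (Submodule.span ℂ (Set.range fun j => e j s) : Set E))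
    (Munq : Set (Fin N → ℂ))
    (hMunq : Munq = {s | s ∈ M ∧ ∃! x : E, x ∈ Sol s})
    (v : (Fin N → ℂ) → E)
    (hv : ∀ s ∈ Munq, Sol s = {v s})
    (hint : (interior Munq).Nonempty) :
    ∃ U : Set (Fin N → ℂ), IsOpen U ∧ U ⊆ Munq ∧ M ⊆ closure U ∧
      AnalyticOnNhd ℂ v U ∧
      ∀ s₀ ∈ M, ∃ W : Set (Fin N → ℂ), IsOpen W ∧ IsConnected W ∧ s₀ ∈ W ∧ W ⊆ M ∧
        ∃ (g : (Fin N → ℂ) → ℂ) (h : (Fin N → ℂ) → E),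
          AnalyticOnNhd ℂ g W ∧ AnalyticOnNhd ℂ h W ∧ (∃ s ∈ W, g s ≠ 0) ∧
          ∀ s ∈ U ∩ W, g s • v s = h s := by
  simp only [hSol, mem_ofPred_eq] at hfin hMunq hv
  choose! B D g h hBo hBc hsB hBM hDo hDB hBD hg hh hg0 hdich using
    fun s (hs : s ∈ M) => exists_meromorphic_chart hμ hc (hfin s hs)
  have hDMunq : ∀ s ∈ M, D s ⊆ Munq := by
    refine hMconn.isPreconnected.forall_subset_of_subset_or_disjoint hBo hsB hDo hBD
      (fun s hs => (hdich s hs).symm.imp (fun hsol t ht => ?_) fun hsol => ?_)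
      ⟨_, (hMunq.le (interior_subset hint.some_mem)).1, hint.some_mem⟩
    · exact hMunq.ge ⟨hBM s hs (hDB s hs ht), _, eq_singleton_iff_unique_mem.1 (hsol t ht)⟩
    · exact disjoint_left.2 fun t ht htM => hsol t ht (hMunq.le htM).2
  have hvD : ∀ s ∈ M, ∀ t ∈ D s, g s t • v t = h s t := by
    intro s hs t ht
    have hsol :=
      (hdich s hs).resolve_left (fun hbad => hbad t ht (hMunq.le (hDMunq s hs ht)).2) t ht
    rw [hv t (hDMunq s hs ht), singleton_eq_singleton_iff] at hsol
    rw [hsol, smul_inv_smul₀ (hg0 s hs t ht)]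
  have hUv : AnalyticOnNhd ℂ v (⋃ s ∈ M, D s) := by
    simp only [AnalyticOnNhd, mem_iUnion₂]
    rintro t ⟨s, hs, ht⟩
    exact AnalyticOnNhd.of_smul_eq (hDo s hs) ((hg s hs).mono (hDB s hs))
      ((hh s hs).mono (hDB s hs)) (hg0 s hs) (hvD s hs) t ht
  refine ⟨_, isOpen_biUnion hDo, iUnion₂_subset hDMunq,
    fun s hs => closure_mono (subset_biUnion_of_mem hs) (hBD s hs (hsB s hs)), hUv,
    fun s hs => ⟨B s, hBo s hs, hBc s hs, hsB s hs, hBM s hs, g s, h s, hg s hs, hh s hs, ?_, ?_⟩⟩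
  · obtain ⟨t, ht⟩ := closure_nonempty_iff.1 ⟨s, hBD s hs (hsB s hs)⟩
    exact ⟨t, hDB s hs ht, hg0 s hs t ht⟩
  · refine EqOn.of_subset_closure (hvD s hs)
      (((hg s hs).continuousOn.mono inter_subset_right).smul
        (hUv.continuousOn.mono inter_subset_left))
      ((hh s hs).continuousOn.mono inter_subset_right)
      (subset_inter (subset_biUnion_of_mem hs) (hDB s hs))
      fun t ht => closure_mono inter_subset_right
        ((isOpen_biUnion hDo).inter_closure ⟨ht.1, hBD s hs ht.2⟩)

/-- **Principle of meromorphic continuation.**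
An analytic family of systems of linear equations which is locally of finite type and
has a unique solution on a set with nonempty interior admits a solution `v` which is
analytic on an open dense subset `U` of the connected open set `M` and is meromorphic
on all of `M`. -/
theorem stmt_0 {N : ℕ} {M : Set (Fin N → ℂ)}
    (hMopen : IsOpen M) (hMconn : IsConnected M)
    {E : Type*} [NormedAddCommGroup E] [NormedSpace ℂ E] [CompleteSpace E]
    {ι : Type*} {F : ι → Type*} [∀ i, NormedAddCommGroup (F i)] [∀ i, NormedSpace ℂ (F i)]
    [∀ i, CompleteSpace (F i)]
    (μ : ∀ i : ι, (Fin N → ℂ) → (E →L[ℂ] F i)) (c : ∀ i : ι, (Fin N → ℂ) → F i)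
    (hμ : ∀ i, AnalyticOnNhd ℂ (μ i) M) (hc : ∀ i, AnalyticOnNhd ℂ (c i) M)
    (Sol : (Fin N → ℂ) → Set E)
    (hSol : ∀ s, Sol s = {x : E | ∀ i, μ i s x = c i s})
    -- the family of systems is locally of finite type
    (hfin : ∀ s₀ ∈ M, ∃ W : Set (Fin N → ℂ), IsOpen W ∧ s₀ ∈ W ∧ W ⊆ M ∧
      ∃ (k : ℕ) (e : Fin k → (Fin N → ℂ) → E),
        (∀ j, AnalyticOnNhd ℂ (e j) W) ∧
        ∀ s ∈ W, Sol s ⊆ (Submodule.span ℂ (Set.range fun j => e j s) : Set E))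
    (Munq : Set (Fin N → ℂ))
    (hMunq : Munq = {s | s ∈ M ∧ ∃! x : E, x ∈ Sol s})
    (v : (Fin N → ℂ) → E)
    (hv : ∀ s ∈ Munq, Sol s = {v s})
    (hint : (interior Munq).Nonempty) :
    ∃ U : Set (Fin N → ℂ), IsOpen U ∧ U ⊆ Munq ∧ M ⊆ closure U ∧
      AnalyticOnNhd ℂ v U ∧
      ∀ s₀ ∈ M, ∃ W : Set (Fin N → ℂ), IsOpen W ∧ IsConnected W ∧ s₀ ∈ W ∧ W ⊆ M ∧
        ∃ (g : (Fin N → ℂ) → ℂ) (h : (Fin N → ℂ) → E),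
          AnalyticOnNhd ℂ g W ∧ AnalyticOnNhd ℂ h W ∧ (∃ s ∈ W, g s ≠ 0) ∧
          ∀ s ∈ U ∩ W, g s • v s = h s :=
  stmt_0_general hMconn μ c hμ hc Sol hSol hfin Munq hMunq v hv hint
end

section
/- Let M be a nonempty open subset of ℂ^N, let B and C be complex Banach spaces, and let μ : M → (B →L[ℂ] C) be analytic. Suppose that for some s₀ ∈ M the operator μ(s₀) is left-invertible modulo compact operators: there exist a continuous linear operator D : C → B and a compact continuous linear operator K : B → B with D ∘ μ(s₀) = id_B − K. Then the homogeneous system v ↦ μ(s)v = 0 is locally of finite type near s₀: there exist an open neighborhood W ⊆ M of s₀, an integer k ≥ 0 and analytic maps e_1, …, e_k : W → B such that for every s ∈ W, ker μ(s) ⊆ span_ℂ{e_1(s), …, e_k(s)}. -/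
/-!
By Riesz theory `1 - K` is Fredholm; if `E` is a quasi-inverse of it, then `E ∘ D` is a left
inverse of `μ s₀` modulo the finite-rank operator `π = 1 - E D μ s₀`. Then `G s = π + E D μ s`
is analytic with `G s₀ = 1`, hence invertible near `s₀`, and it agrees with `π` on `ker μ s`;
so `ker μ s ⊆ (G s)⁻¹ (range π)`, which is spanned by the images under `(G s)⁻¹` of a finite
spanning family of `range π`.

Fredholmness of `1 - K` goes by induction on `dim ker (1 - K)`: when `1 - K` is not surjective,
a rank-one perturbation of `K` with values outside the range strictly lowers the kernel
dimension, and when the kernel is trivial the Fredholm alternative makes `1 - K` surjective.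
-/

open scoped LinearMap.FiniteRangeSetoid
open Function ContinuousLinearMap

section Fredholm

variable {𝕜 X Y : Type*} [NontriviallyNormedField 𝕜]
  [NormedAddCommGroup X] [NormedSpace 𝕜 X] [NormedAddCommGroup Y] [NormedSpace 𝕜 Y]

namespace ContinuousLinearMap

theorem IsFredholm.of_equiv [CompleteSpace 𝕜] {u v : X →L[𝕜] Y} (hu : u.IsFredholm)
    (h : (v : X →ₗ[𝕜] Y) ≈ u) : v.IsFredholm := by
  obtain ⟨w, hw⟩ := hu.exists_isQuasiInverse
  exact .of_isQuasiInverse (hw.congr (Setoid.refl _) h)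

theorem exists_ker_sub_toSpanSingleton_comp_lt [SeparatingDual 𝕜 X] (u : X →L[𝕜] Y)
    (hker : u.ker ≠ ⊥) {y : Y} (hy : y ∉ u.range) :
    ∃ φ : StrongDual 𝕜 X, (u - toSpanSingleton 𝕜 y ∘L φ).ker < u.ker := by
  obtain ⟨x, hxu, hx⟩ := Submodule.ne_bot_iff _ |>.1 hker
  obtain ⟨φ, hφx⟩ := SeparatingDual.exists_ne_zero (R := 𝕜) hx
  have hy0 : y ≠ 0 := fun h => hy (h ▸ Submodule.zero_mem _)
  refine ⟨φ, SetLike.lt_iff_le_and_exists.2 ⟨fun v hv => ?_, x, hxu, fun hx' => ?_⟩⟩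
  · have huv : u v = φ v • y := by simpa [sub_eq_zero] using hv
    have hφv : φ v = 0 := by
      by_contra hφv
      exact hy ⟨(φ v)⁻¹ • v, by simp [huv, hφv]⟩
    simpa [hφv] using huv
  · have : φ x • y = 0 := by simpa [LinearMap.mem_ker.1 hxu] using hx'
    exact smul_ne_zero hφx hy0 this

end ContinuousLinearMap

namespace IsCompactOperator

variable [CompleteSpace X] {K : X →L[𝕜] X}

theorem finiteDimensional_ker_one_sub [CompleteSpace 𝕜] (hK : IsCompactOperator K) :
    FiniteDimensional 𝕜 (1 - K).ker := by
  have hfix : ∀ v ∈ (1 - K).ker, K v = v := fun v hv => by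
    have : v - K v = 0 := by simpa using LinearMap.mem_ker.1 hv
    exact (sub_eq_zero.1 this).symm
  have : CompleteSpace (1 - K).ker := (1 - K).isClosed_ker.completeSpace_coe
  have hmaps : ∀ v ∈ (1 - K).ker, (K : X →ₗ[𝕜] X) v ∈ (1 - K).ker := fun v hv => by
    simp [hfix v hv]
  have hid : ⇑((K : X →ₗ[𝕜] X).restrict hmaps) = id :=
    funext fun v => Subtype.ext (hfix v v.2)
  exact .of_isCompactOperator_id (hid ▸ hK.restrict' hmaps)

theorem surjective_one_sub (hK : IsCompactOperator K) (hinj : Injective (1 - K : X →L[𝕜] X)) :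
    Surjective (1 - K : X →L[𝕜] X) := by
  have h1 : ¬ Module.End.HasEigenvalue (K : Module.End 𝕜 X) 1 := by
    rw [Module.End.hasEigenvalue_iff, ne_eq, not_not, eq_bot_iff]
    intro v hv
    have hKv : K v = v := by simpa using Module.End.mem_eigenspace_iff.1 hv
    exact hinj (by simp [hKv])
  have := (hK.hasEigenvalue_or_mem_resolventSet one_ne_zero).resolve_left h1
  rw [spectrum.mem_resolventSet_iff, ContinuousLinearMap.isUnit_iff_bijective] at this
  simpa using this.2

end IsCompactOperator

end Fredholm

section RCLike

variable {𝕜 X Y : Type*} [RCLike 𝕜] [NormedAddCommGroup X] [NormedSpace 𝕜 X] [CompleteSpace X]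

theorem ContinuousLinearMap.isFredholm_of_surjective [NormedAddCommGroup Y] [NormedSpace 𝕜 Y]
    [CompleteSpace Y] {u : X →L[𝕜] Y} [FiniteDimensional 𝕜 u.ker] (hu : Surjective u) :
    u.IsFredholm where
  isStrictMap := (u.isOpenMap hu).isStrictMap u.continuous
  isClosed_range := by simp [LinearMap.range_eq_top.2 hu]
  finite_ker := ‹_›
  finite_coker := by rw [LinearMap.range_eq_top.2 hu]; exact .top
  closedComplemented_ker := .of_finiteDimensional _

theorem IsCompactOperator.isFredholm_one_sub {K : X →L[𝕜] X} (hK : IsCompactOperator K) :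
    (1 - K).IsFredholm := by
  induction h : Module.finrank 𝕜 (1 - K).ker using Nat.strong_induction_on generalizing K with
  | _ n ih =>
  have := hK.finiteDimensional_ker_one_sub
  by_cases hsurj : Surjective (1 - K : X →L[𝕜] X)
  · exact isFredholm_of_surjective hsurj
  obtain ⟨y, hy⟩ := not_forall.1 hsurj
  have hker : (1 - K).ker ≠ ⊥ := fun h =>
    hsurj (hK.surjective_one_sub (LinearMap.ker_eq_bot.1 h))
  obtain ⟨φ, hlt⟩ := (1 - K).exists_ker_sub_toSpanSingleton_comp_lt hker (y := y)
    (fun ⟨x, hx⟩ => hy ⟨x, hx⟩)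
  set F := toSpanSingleton 𝕜 y ∘L φ
  have hF : IsCompactOperator (K + F) :=
    hK.add ((isCompactOperator_of_locallyCompactSpace_rng (toSpanSingleton 𝕜 y)).comp_clm φ)
  have hKF : 1 - (K + F) = 1 - K - F := sub_add_eq_sub_sub _ _ _
  refine (ih _ ?_ hF rfl).of_equiv ?_
  · rw [← h, hKF]
    exact Submodule.finrank_lt_finrank_of_lt hlt
  · rw [LinearMap.FiniteRangeSetoid.equiv_iff_hasNoetherianRange, hKF,
      ← ContinuousLinearMap.toLinearMap_sub, sub_sub_cancel]
    exact LinearMap.HasNoetherianRange.of_isNoetherian_dom.comp_right (φ : X →ₗ[𝕜] 𝕜)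

end RCLike

section AnalyticFamily

variable {𝕜 E B C : Type*} [NontriviallyNormedField 𝕜] [NormedAddCommGroup E] [NormedSpace 𝕜 E]
  [NormedAddCommGroup B] [NormedSpace 𝕜 B] [CompleteSpace B]
  [NormedAddCommGroup C] [NormedSpace 𝕜 C]

theorem exists_analyticOnNhd_ker_subset_span_of_isLeftQuasiInverse {M : Set E} (hM : IsOpen M)
    {μ : E → B →L[𝕜] C} (hμ : AnalyticOnNhd 𝕜 μ M) {s₀ : E} (hs₀ : s₀ ∈ M) {L : C →L[𝕜] B}
    (hL : (L : C →ₗ[𝕜] B).IsLeftQuasiInverse (μ s₀)) :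
    ∃ W : Set E, IsOpen W ∧ s₀ ∈ W ∧ W ⊆ M ∧
      ∃ (k : ℕ) (e : Fin k → E → B),
        (∀ j, AnalyticOnNhd 𝕜 (e j) W) ∧
        ∀ s ∈ W, {v : B | μ s v = 0} ⊆ (Submodule.span 𝕜 (Set.range fun j => e j s) : Set B) := by
  set π : B →L[𝕜] B := 1 - L ∘L μ s₀
  obtain ⟨k, b, hb⟩ : ∃ (k : ℕ) (b : Fin k → B), Submodule.span 𝕜 (Set.range b) = π.range :=
    Submodule.fg_iff_exists_fin_generating_family.1
      (LinearMap.FiniteRangeSetoid.equiv_iff_hasNoetherianRange.1 (Setoid.symm hL)).hasFiniteRange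
  set G : E → B →L[𝕜] B := fun s => π + L ∘L μ s
  have hG : AnalyticOnNhd 𝕜 G M :=
    analyticOnNhd_const.add ((compL 𝕜 B C B L).comp_analyticOnNhd hμ)
  have hGv : ∀ s v, μ s v = 0 → G s v = π v := fun s v hv => by simp [G, hv]
  refine ⟨M ∩ G ⁻¹' {T | IsUnit T}, hG.continuousOn.isOpen_inter_preimage hM Units.isOpen,
    ⟨hs₀, by simp [G, π]⟩, Set.inter_subset_left, k, fun j s => Ring.inverse (G s) (b j),
    fun j => (apply 𝕜 B (b j)).comp_analyticOnNhd
      (analyticOnNhd_inverse.comp (hG.mono Set.inter_subset_left) fun s hs => hs.2), ?_⟩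
  intro s hs v hv
  have hvπ : Ring.inverse (G s) (π v) = v := by
    rw [← hGv s v hv]
    exact congr($(Ring.inverse_mul_cancel _ hs.2) v)
  have hπv : π v ∈ Submodule.span 𝕜 (Set.range b) := hb ▸ LinearMap.mem_range_self _ v
  have hmem := Submodule.apply_mem_span_image_of_mem_span
    ((Ring.inverse (G s) : B →L[𝕜] B) : B →ₗ[𝕜] B) hπv
  rw [← Set.range_comp] at hmem
  exact hvπ ▸ hmem

end AnalyticFamily

theorem stmt_1_general {N : ℕ} {M : Set (Fin N → ℂ)} (hM : IsOpen M)
    {B C : Type*} [NormedAddCommGroup B] [NormedSpace ℂ B] [CompleteSpace B]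
    [NormedAddCommGroup C] [NormedSpace ℂ C]
    (μ : (Fin N → ℂ) → (B →L[ℂ] C)) (hμ : AnalyticOnNhd ℂ μ M)
    (s₀ : Fin N → ℂ) (hs₀ : s₀ ∈ M)
    (D : C →L[ℂ] B) (K : B →L[ℂ] B) (hK : IsCompactOperator K)
    (hDK : ∀ v : B, D (μ s₀ v) = v - K v) :
    ∃ W : Set (Fin N → ℂ), IsOpen W ∧ s₀ ∈ W ∧ W ⊆ M ∧
      ∃ (k : ℕ) (e : Fin k → (Fin N → ℂ) → B),
        (∀ j, AnalyticOnNhd ℂ (e j) W) ∧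
        ∀ s ∈ W, {v : B | μ s v = 0} ⊆
          (Submodule.span ℂ (Set.range fun j => e j s) : Set B) := by
  obtain ⟨E, hE⟩ := hK.isFredholm_one_sub.exists_isQuasiInverse
  have hDμ : (D : C →ₗ[ℂ] B) ∘ₗ (μ s₀ : B →ₗ[ℂ] C) = ((1 - K : B →L[ℂ] B) : B →ₗ[ℂ] B) :=
    LinearMap.ext fun v => by simp [hDK]
  refine exists_analyticOnNhd_ker_subset_span_of_isLeftQuasiInverse hM hμ hs₀ (L := E ∘L D) ?_
  change (E : B →ₗ[ℂ] B) ∘ₗ ((D : C →ₗ[ℂ] B) ∘ₗ μ s₀) ≈ LinearMap.id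
  rw [hDμ]
  exact hE.1

/-- If `μ s₀` is left-invertible modulo compact operators, then the homogeneous system
`μ s v = 0` is locally of finite type near `s₀`. -/
theorem stmt_1 {N : ℕ} {M : Set (Fin N → ℂ)} (hM : IsOpen M) (hMne : M.Nonempty)
    {B C : Type*} [NormedAddCommGroup B] [NormedSpace ℂ B] [CompleteSpace B]
    [NormedAddCommGroup C] [NormedSpace ℂ C] [CompleteSpace C]
    (μ : (Fin N → ℂ) → (B →L[ℂ] C)) (hμ : AnalyticOnNhd ℂ μ M)
    (s₀ : Fin N → ℂ) (hs₀ : s₀ ∈ M)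
    (D : C →L[ℂ] B) (K : B →L[ℂ] B) (hK : IsCompactOperator K)
    (hDK : ∀ v : B, D (μ s₀ v) = v - K v) :
    ∃ W : Set (Fin N → ℂ), IsOpen W ∧ s₀ ∈ W ∧ W ⊆ M ∧
      ∃ (k : ℕ) (e : Fin k → (Fin N → ℂ) → B),
        (∀ j, AnalyticOnNhd ℂ (e j) W) ∧
        ∀ s ∈ W, {v : B | μ s v = 0} ⊆
          (Submodule.span ℂ (Set.range fun j => e j s) : Set B) :=
  stmt_1_general hM μ hμ s₀ hs₀ D K hK hDK
end

section
/- Let n ≥ 1, let λ_1, …, λ_n be pairwise distinct complex numbers, and let P_1, …, P_n be nonzero polynomials with complex coefficients. If the function f : ℝ → ℂ defined by f(x) = Σ_{i=1}^n e^{λ_i x} · P_i(x) is bounded on ℝ, then Re λ_i = 0 for every i. -/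
/-!
Shifting by a real `h` multiplies the term `e^{μx} Q(x)` of `f` by `e^{μh}` and replaces `Q` by
`Q(x + h)`, which has the same degree and leading coefficient. Hence in the bounded exponential
polynomial `x ↦ f(x + h) - e^{μh} f(x)` the degree of the `μ`-coefficient has dropped, no other
degree has grown, and the `λ`-coefficient survives as long as `e^{λh} ≠ e^{μh}` (or, if
`μ = λ`, as long as that coefficient is nonconstant, since no nonconstant polynomial is periodic).
Well-founded induction on the tuple of degrees leaves a bounded `c e^{λx}` with `c ≠ 0`, which
forces `Re λ = 0`.
-/

open Polynomial Complex Function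

namespace Polynomial

variable {R : Type*} [CommRing R]

theorem degree_smul_taylor_sub_smul_le (a c r : R) (p : R[X]) :
    (a • taylor r p - c • p).degree ≤ p.degree :=
  (degree_sub_le _ _).trans <|
    max_le ((degree_smul_le _ _).trans (degree_taylor p r).le) (degree_smul_le _ _)

theorem degree_smul_taylor_sub_smul_lt (c r : R) {p : R[X]} (hp : p ≠ 0) :
    (c • taylor r p - c • p).degree < p.degree := by
  rw [← smul_sub]
  refine (degree_smul_le _ _).trans_lt ?_
  simpa using degree_sub_lt_left (degree_taylor p r) ((taylor_eq_zero r p).not.mpr hp)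
    (leadingCoeff_taylor r p)

theorem smul_taylor_sub_smul_ne_zero [IsDomain R] {a c : R} (hac : a ≠ c) (r : R) {p : R[X]}
    (hp : p ≠ 0) : a • taylor r p - c • p ≠ 0 := by
  intro h
  have := congrArg (coeff · p.natDegree) h
  simp only [coeff_sub, coeff_smul, smul_eq_mul, coeff_taylor_natDegree, coeff_zero] at this
  rw [← leadingCoeff, ← sub_mul] at this
  exact mul_ne_zero (sub_ne_zero.mpr hac) (leadingCoeff_ne_zero.mpr hp) this

theorem taylor_sub_ne_zero [IsDomain R] [CharZero R] {r : R} (hr : r ≠ 0) {p : R[X]}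
    (hp : p.natDegree ≠ 0) : taylor r p - p ≠ 0 := by
  intro h
  have hperiodic : ∀ n : ℕ, p.eval (n * r) = p.eval 0 := by
    intro n
    induction n with
    | zero => simp
    | succ n ih => rw [Nat.cast_succ, add_one_mul, ← taylor_eval, sub_eq_zero.mp h, ih]
  have hconst : p - C (p.eval 0) = 0 :=
    eq_zero_of_infinite_isRoot _ <|
      (Set.infinite_range_of_injective ((mul_left_injective₀ hr).comp Nat.cast_injective)).mono
        (by rintro _ ⟨n, rfl⟩; simp [hperiodic])
  exact hp (by rw [sub_eq_zero.mp hconst, natDegree_C])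

end Polynomial

namespace Complex

theorem exists_exp_mul_ofReal_ne {a b : ℂ} (hab : a ≠ b) :
    ∃ h : ℝ, exp (a * h) ≠ exp (b * h) := by
  suffices ∃ h : ℝ, exp ((a - b) * h) ≠ 1 by
    obtain ⟨h, hh⟩ := this
    exact ⟨h, fun he => hh (by rw [sub_mul, exp_sub, he, div_self (exp_ne_zero _)])⟩
  by_cases hexp : exp (a - b) = 1
  · -- `a - b = 2πin` with `n ≠ 0`, and then `(a - b) / (2n) = πi`
    obtain ⟨n, hn⟩ := exp_eq_one_iff.mp hexp
    have hn0 : (n : ℂ) ≠ 0 := by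
      rintro h0
      rw [h0, zero_mul] at hn
      exact sub_ne_zero.mpr hab hn
    refine ⟨1 / (2 * n), ?_⟩
    have : (a - b) * ((1 / (2 * n) : ℝ) : ℂ) = Real.pi * I := by
      rw [hn]; push_cast; field_simp
    rw [this, exp_pi_mul_I]
    norm_num
  · exact ⟨1, by simpa using hexp⟩

theorem re_eq_zero_of_norm_exp_mul_le {lam a : ℂ} (ha : a ≠ 0) {C : ℝ}
    (h : ∀ x : ℝ, ‖exp (lam * x) * a‖ ≤ C) : lam.re = 0 := by
  by_contra hre
  have ha' : 0 < ‖a‖ := norm_pos_iff.mpr ha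
  set t := C / ‖a‖
  have hbound : Real.exp t * ‖a‖ ≤ C := by
    simpa [norm_mul, norm_exp, mul_div_cancel₀ _ hre] using h (t / lam.re)
  have : (t + 1) * ‖a‖ ≤ C :=
    (mul_le_mul_of_nonneg_right (Real.add_one_le_exp t) ha'.le).trans hbound
  rw [add_one_mul, div_mul_cancel₀ _ ha'.ne'] at this
  linarith

end Complex

def BoundedOnReals (f : ℂ → ℂ) : Prop := ∃ C, ∀ x : ℝ, ‖f x‖ ≤ C

theorem BoundedOnReals.shift_sub {f : ℂ → ℂ} (hf : BoundedOnReals f) (h : ℝ) (c : ℂ) :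
    BoundedOnReals fun x => f (x + h) - c * f x := by
  obtain ⟨C, hC⟩ := hf
  refine ⟨C + ‖c‖ * C, fun x => (norm_sub_le _ _).trans (add_le_add ?_ ?_)⟩
  · simpa using hC (x + h)
  · rw [norm_mul]
    exact mul_le_mul_of_nonneg_left (hC x) (norm_nonneg c)

noncomputable section

namespace ExpPoly

variable {ι : Type*} (lam : ι → ℂ)

def eval [Fintype ι] (P : ι → ℂ[X]) (x : ℂ) : ℂ :=
  ∑ i, exp (lam i * x) * (P i).eval x

def shiftSub (h c : ℂ) (P : ι → ℂ[X]) (i : ι) : ℂ[X] :=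
  exp (lam i * h) • taylor h (P i) - c • P i

theorem eval_shiftSub [Fintype ι] (h c : ℂ) (P : ι → ℂ[X]) (x : ℂ) :
    eval lam (shiftSub lam h c P) x = eval lam P (x + h) - c * eval lam P x := by
  simp only [eval, shiftSub, Finset.mul_sum, ← Finset.sum_sub_distrib]
  refine Finset.sum_congr rfl fun i _ => ?_
  simp only [eval_sub, eval_smul, taylor_eval, smul_eq_mul, mul_add, exp_add]
  ring

theorem degree_shiftSub_lt (h : ℂ) (P : ι → ℂ[X]) {j : ι} (hj : P j ≠ 0) :
    (fun i => (shiftSub lam h (exp (lam j * h)) P i).degree) < fun i => (P i).degree :=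
  Pi.lt_def.mpr ⟨fun _ => degree_smul_taylor_sub_smul_le _ _ _ _, j,
    degree_smul_taylor_sub_smul_lt _ _ hj⟩

variable [Fintype ι] {lam}

theorem eval_eq_of_forall_ne_eq_zero {P : ι → ℂ[X]} {i : ι} (hP : ∀ j ≠ i, P j = 0)
    (x : ℂ) :
    eval lam P x = exp (lam i * x) * (P i).eval x :=
  Fintype.sum_eq_single i fun j hj => by simp [hP j hj]

theorem boundedOnReals_shiftSub {P : ι → ℂ[X]} (hP : BoundedOnReals (eval lam P)) (h : ℝ)
    (c : ℂ) : BoundedOnReals (eval lam (shiftSub lam h c P)) := by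
  rw [show eval lam (shiftSub lam h c P) = _ from funext (eval_shiftSub lam h c P)]
  exact hP.shift_sub h c

theorem re_eq_zero_of_boundedOnReals (hlam : Injective lam) (P : ι → ℂ[X]) {i : ι}
    (hPi : P i ≠ 0) (hbd : BoundedOnReals (eval lam P)) : (lam i).re = 0 := by
  induction P using
    (InvImage.wf (fun (P : ι → ℂ[X]) j => (P j).degree) wellFounded_lt).induction
    generalizing i with
  | _ P ih =>
  by_cases hrest : ∃ j ≠ i, P j ≠ 0
  · obtain ⟨j, hji, hPj⟩ := hrest
    obtain ⟨h, hh⟩ := exists_exp_mul_ofReal_ne (hlam.ne hji.symm)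
    exact ih _ (degree_shiftSub_lt lam h P hPj) (smul_taylor_sub_smul_ne_zero hh _ hPi)
      (boundedOnReals_shiftSub hbd h _)
  push Not at hrest
  by_cases hdeg : (P i).natDegree = 0
  · obtain ⟨C, hC⟩ := hbd
    simp only [eval_eq_of_forall_ne_eq_zero hrest] at hC
    rw [eq_C_of_natDegree_eq_zero hdeg] at hPi hC
    simp only [eval_C] at hC
    exact re_eq_zero_of_norm_exp_mul_le (C_ne_zero.mp hPi) hC
  · have hne : shiftSub lam (1 : ℝ) (exp (lam i * (1 : ℝ))) P i ≠ 0 := by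
      rw [shiftSub, ← smul_sub, ofReal_one]
      exact smul_ne_zero (exp_ne_zero _) (taylor_sub_ne_zero one_ne_zero hdeg)
    exact ih _ (degree_shiftSub_lt lam _ P hPi) hne (boundedOnReals_shiftSub hbd 1 _)

end ExpPoly

end

theorem stmt_5_general (n : ℕ) (lam : Fin n → ℂ) (hlam : Function.Injective lam)
    (P : Fin n → Polynomial ℂ) (hP : ∀ i, P i ≠ 0)
    (hbd : ∃ C : ℝ, ∀ x : ℝ,
      ‖∑ i, Complex.exp (lam i * x) * (P i).eval (x : ℂ)‖ ≤ C) :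
    ∀ i, (lam i).re = 0 :=
  fun i => ExpPoly.re_eq_zero_of_boundedOnReals hlam P (hP i) hbd

theorem stmt_5 (n : ℕ) (hn : 1 ≤ n) (lam : Fin n → ℂ) (hlam : Function.Injective lam)
    (P : Fin n → Polynomial ℂ) (hP : ∀ i, P i ≠ 0)
    (hbd : ∃ C : ℝ, ∀ x : ℝ,
      ‖∑ i, Complex.exp (lam i * x) * (P i).eval (x : ℂ)‖ ≤ C) :
    ∀ i, (lam i).re = 0 :=
  stmt_5_general n lam hlam P hP hbd
end

section
/- Let n ≥ 1, let λ_1, …, λ_n be complex numbers that are pairwise distinct modulo 2πiℤ, and let P_1, …, P_n be nonzero polynomials with complex coefficients. If the function f : ℤ → ℂ defined by f(x) = Σ_{i=1}^n e^{λ_i x} · P_i(x) is bounded on ℤ, then Re λ_i = 0 for every i. -/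
/-!
Write `z_j = e^{λ_j}`, so that `f x = ∑ z_j^x P_j(x)` with the `z_j` nonzero and pairwise
distinct. On sequences `ℤ → ℂ` the function `x ↦ z^x` is an eigenvector of the shift `S` with
eigenvalue `z`, and `S - z` acts on `x ↦ z^x Q(x)` as `z` times the forward difference of `Q`.
Hence `(S - z_j)^(deg P_j + 1)` annihilates the `j`-th term of `f`, while `(S - z_i)^(deg P_i)`
turns the `i`-th term into `z_i^x` times a nonzero constant. Applying all the former for `j ≠ i`
and the latter to `f` leaves `c z_i^x` with `c ≠ 0`, which is still bounded because the shift
preserves boundedness; so `|z_i| = 1`, i.e. `Re λ_i = 0`.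
-/

open Polynomial fwdDiff
open scoped ENNReal Nat

theorem fwdDiff_iter_comp_addMonoidHom {M M' G : Type*} [AddCommMonoid M] [AddCommMonoid M']
    [AddCommGroup G] (h : M) (e : M →+ M') (f : M' → G) (n : ℕ) :
    (Δ_[h])^[n] (f ∘ e) = ((Δ_[e h])^[n] f) ∘ e := by
  funext y
  simp [fwdDiff_iter_eq_sum_shift, map_add, map_nsmul]

section Field
variable (K : Type*) [Field K]

def seqShift : Module.End K (ℤ → K) := LinearMap.funLeft K K (· + 1)

variable {K}

@[simp] lemma seqShift_apply (g : ℤ → K) (x : ℤ) : seqShift K g x = g (x + 1) := rfl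

lemma aeval_seqShift_X_sub_C_pow_zpow_mul {z : K} (hz : z ≠ 0) (q : ℤ → K) (k : ℕ) :
    aeval (seqShift K) ((X - C z) ^ k) (fun x => z ^ x * q x) =
      fun x => z ^ x * (z ^ k * (Δ_[1])^[k] q x) := by
  induction k with
  | zero => simp
  | succ k ih =>
    funext x
    rw [pow_succ', map_mul, Module.End.mul_apply, ih]
    simp only [aeval_sub, aeval_X, aeval_C, LinearMap.sub_apply, Module.algebraMap_end_apply,
      Pi.sub_apply, Pi.smul_apply, seqShift_apply, zpow_add_one₀ hz, smul_eq_mul,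
      Function.iterate_succ_apply', fwdDiff]
    ring

lemma aeval_seqShift_zpow {z : K} (hz : z ≠ 0) (p : K[X]) :
    aeval (seqShift K) p (fun x => z ^ x) = p.eval z • fun x => z ^ x := by
  refine Module.End.aeval_apply_of_hasEigenvector ⟨?_, ?_⟩
  · rw [Module.End.mem_eigenspace_iff]
    funext x
    simp [zpow_add_one₀ hz, mul_comm]
  · exact fun h => one_ne_zero (α := K) (by simpa using congrFun h (0 : ℤ))

lemma fwdDiff_iter_eval_intCast (Q : K[X]) (k : ℕ) :
    (Δ_[1])^[k] (fun x : ℤ => Q.eval (x : K)) = fun x : ℤ => (Δ_[1])^[k] Q.eval (x : K) := by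
  simpa [Function.comp_def] using fwdDiff_iter_comp_addMonoidHom 1 (Int.castAddHom K) Q.eval k

lemma aeval_seqShift_eq_zero_of_dvd {z : K} (hz : z ≠ 0) {Q p : K[X]}
    (hp : (X - C z) ^ (Q.natDegree + 1) ∣ p) :
    aeval (seqShift K) p (fun x => z ^ x * Q.eval (x : K)) = 0 := by
  obtain ⟨r, rfl⟩ := hp
  rw [mul_comm, map_mul, Module.End.mul_apply, aeval_seqShift_X_sub_C_pow_zpow_mul hz,
    fwdDiff_iter_eval_intCast, Q.fwdDiff_iter_degree_add_one_eq_zero]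
  simp only [Pi.zero_apply, mul_zero]
  exact map_zero (aeval (seqShift K) r)

lemma aeval_seqShift_X_sub_C_pow_natDegree {z : K} (hz : z ≠ 0) (Q : K[X]) :
    aeval (seqShift K) ((X - C z) ^ Q.natDegree) (fun x => z ^ x * Q.eval (x : K)) =
      (z ^ Q.natDegree * (Q.leadingCoeff * Q.natDegree !)) • fun x => z ^ x := by
  rw [aeval_seqShift_X_sub_C_pow_zpow_mul hz, fwdDiff_iter_eval_intCast,
    Q.fwdDiff_iter_degree_eq_factorial]
  funext x
  simp [mul_comm]

end Field

section Normed
variable {K : Type*} [NormedField K]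

lemma memℓp_seqShift {g : ℤ → K} (hg : Memℓp g ∞) : Memℓp (seqShift K g) ∞ := by
  rw [memℓp_infty_iff] at hg ⊢
  refine hg.mono ?_
  rintro _ ⟨x, rfl⟩
  exact ⟨x + 1, rfl⟩

lemma memℓp_aeval_seqShift (p : K[X]) {g : ℤ → K} (hg : Memℓp g ∞) :
    Memℓp (aeval (seqShift K) p g) ∞ := by
  induction p using Polynomial.induction_on' with
  | add p q hp hq => simpa using hp.add hq
  | monomial n a =>
    rw [aeval_monomial, Module.End.mul_apply, Module.algebraMap_end_apply]
    refine Memℓp.const_smul ?_ a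
    induction n with
    | zero => simpa using hg
    | succ n ih => rw [pow_succ', Module.End.mul_apply]; exact memℓp_seqShift ih

lemma norm_eq_one_of_memℓp_zpow {z : K} (hz : z ≠ 0) (h : Memℓp (fun x : ℤ => z ^ x) ∞) :
    ‖z‖ = 1 := by
  obtain ⟨C, hC⟩ := memℓp_infty_iff.1 h
  have hbound : ∀ x : ℤ, ‖z‖ ^ x ≤ C := fun x => by simpa using hC ⟨x, rfl⟩
  have hle : ∀ a : ℝ, (∀ n : ℕ, a ^ n ≤ C) → a ≤ 1 := fun a ha => not_lt.1 fun h1 =>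
    let ⟨n, hn⟩ := pow_unbounded_of_one_lt C h1
    (ha n).not_gt hn
  refine le_antisymm (hle _ fun n => by simpa using hbound n) ?_
  exact (inv_le_one₀ (norm_pos_iff.2 hz)).1 (hle _ fun n => by simpa using hbound (-n))

theorem norm_eq_one_of_memℓp_sum_zpow_mul_eval {ι : Type*} [CharZero K] [Fintype ι] [DecidableEq ι]
    {z : ι → K} (hz : ∀ j, z j ≠ 0) (hinj : Function.Injective z)
    {P : ι → K[X]} (h : Memℓp (fun x : ℤ => ∑ j, z j ^ x * (P j).eval (x : K)) ∞)
    {i : ι} (hi : P i ≠ 0) : ‖z i‖ = 1 := by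
  set A := ∏ j ∈ Finset.univ.erase i, (X - C (z j)) ^ ((P j).natDegree + 1)
  set c := z i ^ (P i).natDegree * ((P i).leadingCoeff * (P i).natDegree !) * A.eval (z i)
  have hA : A.eval (z i) ≠ 0 := by
    simp only [A, eval_prod, eval_pow, eval_sub, eval_X, eval_C]
    exact Finset.prod_ne_zero_iff.2 fun j hj =>
      pow_ne_zero _ (sub_ne_zero.2 (hinj.ne (Finset.ne_of_mem_erase hj).symm))
  have hc : c ≠ 0 := mul_ne_zero (mul_ne_zero (pow_ne_zero _ (hz i)) <|
    mul_ne_zero (leadingCoeff_ne_zero.2 hi) (Nat.cast_ne_zero.2 (Nat.factorial_ne_zero _))) hA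
  have hvanish : ∀ j, j ≠ i → aeval (seqShift K) (A * (X - C (z i)) ^ (P i).natDegree)
      (fun x => z j ^ x * (P j).eval (x : K)) = 0 := fun j hj =>
    aeval_seqShift_eq_zero_of_dvd (hz j) <| (Finset.dvd_prod_of_mem _
      (Finset.mem_erase.2 ⟨hj, Finset.mem_univ j⟩)).mul_right _
  have hreduce : aeval (seqShift K) (A * (X - C (z i)) ^ (P i).natDegree)
      (fun x : ℤ => ∑ j, z j ^ x * (P j).eval (x : K)) = c • fun x => z i ^ x := by
    rw [← Finset.sum_fn, map_sum, Finset.sum_eq_single i (fun j _ hj => hvanish j hj) (by simp),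
      map_mul, Module.End.mul_apply, aeval_seqShift_X_sub_C_pow_natDegree (hz i), map_smul,
      aeval_seqShift_zpow (hz i), smul_smul]
  have hbdd := memℓp_aeval_seqShift (A * (X - C (z i)) ^ (P i).natDegree) h
  rw [hreduce] at hbdd
  exact norm_eq_one_of_memℓp_zpow (hz i) (by simpa [hc] using hbdd.const_smul c⁻¹)

end Normed

theorem stmt_6_general (n : ℕ) (lam : Fin n → ℂ)
    (hlam : ∀ i j : Fin n, i ≠ j →
      ¬∃ k : ℤ, lam i - lam j = 2 * Real.pi * Complex.I * k)
    (P : Fin n → Polynomial ℂ) (hP : ∀ i, P i ≠ 0)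
    (hbd : ∃ C : ℝ, ∀ x : ℤ,
      ‖∑ i, Complex.exp (lam i * x) * (P i).eval (x : ℂ)‖ ≤ C) :
    ∀ i, (lam i).re = 0 := by
  intro i
  have hinj : Function.Injective fun j => Complex.exp (lam j) := fun j k hjk => by
    by_contra hne
    obtain ⟨m, hm⟩ := Complex.exp_eq_exp_iff_exists_int.1 hjk
    exact hlam j k hne ⟨m, by rw [hm]; ring⟩
  have hmem : Memℓp (fun x : ℤ => ∑ j, Complex.exp (lam j) ^ x * (P j).eval (x : ℂ)) ∞ := by
    obtain ⟨C, hC⟩ := hbd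
    refine memℓp_infty_iff.2 ⟨C, ?_⟩
    rintro _ ⟨x, rfl⟩
    simpa [← Complex.exp_int_mul, mul_comm] using hC x
  have := norm_eq_one_of_memℓp_sum_zpow_mul_eval (fun j => Complex.exp_ne_zero _) hinj hmem (hP i)
  rwa [Complex.norm_exp, Real.exp_eq_one_iff] at this

theorem stmt_6 (n : ℕ) (hn : 1 ≤ n) (lam : Fin n → ℂ)
    (hlam : ∀ i j : Fin n, i ≠ j →
      ¬∃ k : ℤ, lam i - lam j = 2 * Real.pi * Complex.I * k)
    (P : Fin n → Polynomial ℂ) (hP : ∀ i, P i ≠ 0)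
    (hbd : ∃ C : ℝ, ∀ x : ℤ,
      ‖∑ i, Complex.exp (lam i * x) * (P i).eval (x : ℂ)‖ ≤ C) :
    ∀ i, (lam i).re = 0 :=
  stmt_6_general n lam hlam P hP hbd
end

section
/- Let Φ be a crystallographic root system in a finite-dimensional real inner product space V with base Δ. Let S ⊆ Δ and β ∈ Δ ∖ S, and let α be the orthogonal projection of β onto the orthogonal complement of the linear span of S. Then α is a linear combination of the elements of Δ with all coefficients nonnegative. -/
/-!
Distinct simple roots `s, t` satisfy `⟪s, t⟫ ≤ 0`: otherwise reflecting `s` in `t` gives the root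
`s - c • t` with `c > 0`, whose coordinates have both signs.

Write the projection `p` of `β` onto `span S` as `q + r`, where `q` and `r` collect the positive and
the nonpositive coordinates. As `β - p ⟂ q`, we get `‖q‖² = ⟪β, q⟫ - ⟪r, q⟫`, and obtuseness gives
`⟪β, q⟫ ≤ 0 ≤ ⟪r, q⟫`, since `β ∉ S` and `q`, `r` have disjoint supports. Hence `q = 0`, and
`β - p = β - r` has nonnegative coordinates.
-/

open scoped RealInnerProductSpace

open Finset Submodule

section

variable {V : Type*} [NormedAddCommGroup V] [InnerProductSpace ℝ V]

theorem pairwise_inner_nonpos_of_base {Φ : Set V}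
    (hrefl : ∀ α ∈ Φ, ∀ β ∈ Φ, β - (2 * ⟪β, α⟫ / ⟪α, α⟫) • α ∈ Φ)
    {Δ : Finset V} (hΔΦ : (Δ : Set V) ⊆ Φ) (hli : LinearIndepOn ℝ id (Δ : Set V))
    (hbase : ∀ γ ∈ Φ, ∃ c : V → ℤ,
      γ = ∑ v ∈ Δ, (c v : ℝ) • v ∧ ((∀ v ∈ Δ, 0 ≤ c v) ∨ (∀ v ∈ Δ, c v ≤ 0))) :
    (Δ : Set V).Pairwise fun u v => ⟪u, v⟫ ≤ 0 := by
  classical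
  rintro s (hs : s ∈ Δ) t (ht : t ∈ Δ) hst
  by_contra! hpos
  have htt : 0 < ⟪t, t⟫ := real_inner_self_pos.mpr (hli.ne_zero ht)
  obtain ⟨n, hn, hsign⟩ := hbase _ (hrefl t (hΔΦ ht) s (hΔΦ hs))
  set c := 2 * ⟪s, t⟫ / ⟪t, t⟫
  have hc : 0 < c := by positivity
  have hcoord := linearIndepOn_iff'.mp hli Δ
    (fun v => n v - (if v = s then 1 else 0) + (if v = t then c else 0)) subset_rfl
    (by simp [add_smul, sub_smul, sum_add_distrib, sum_sub_distrib, hs, ht, ← hn])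
  have hns : (n s : ℝ) = 1 := by simpa [hst, sub_eq_zero] using hcoord s hs
  have hnt : (n t : ℝ) = -c := by simpa [hst.symm, add_eq_zero_iff_eq_neg] using hcoord t ht
  rcases hsign with hnonneg | hnonpos
  · linarith [show (0 : ℝ) ≤ n t from mod_cast hnonneg t ht]
  · linarith [show (n s : ℝ) ≤ 0 from mod_cast hnonpos s hs]

theorem inner_sum_min_smul_sum_max_smul_nonneg {S : Finset V}
    (hS : (S : Set V).Pairwise fun u v => ⟪u, v⟫ ≤ 0) (f : V → ℝ) :
    0 ≤ ⟪∑ v ∈ S, min (f v) 0 • v, ∑ w ∈ S, max (f w) 0 • w⟫ := by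
  rw [sum_inner]
  refine sum_nonneg fun v hv => ?_
  rw [inner_sum]
  refine sum_nonneg fun w hw => ?_
  rw [real_inner_smul_left, real_inner_smul_right]
  by_cases hvw : v = w
  · subst hvw
    rcases le_total (f v) 0 with h | h <;> simp [h]
  · exact mul_nonneg_of_nonpos_of_nonpos (min_le_right _ _)
      (mul_nonpos_of_nonneg_of_nonpos (le_max_right _ _) (hS hv hw hvw))

theorem starProjection_span_eq_sum_nonpos_smul {S : Finset V}
    (hS : (S : Set V).Pairwise fun u v => ⟪u, v⟫ ≤ 0) {x : V} (hx : ∀ v ∈ S, ⟪x, v⟫ ≤ 0) :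
    ∃ f : V → ℝ, (∀ v, f v ≤ 0) ∧ f.support ⊆ S ∧
      (span ℝ (S : Set V)).starProjection x = ∑ v ∈ S, f v • v := by
  set K := span ℝ (S : Set V)
  obtain ⟨f, hfS, hf⟩ := mem_span_finset.mp (K.starProjection_apply_mem x)
  set q := ∑ v ∈ S, max (f v) 0 • v
  set r := ∑ v ∈ S, min (f v) 0 • v
  have hqr : K.starProjection x = q + r := by
    rw [← hf, ← sum_add_distrib]
    exact sum_congr rfl fun v _ => by rw [← add_smul, max_add_min, add_zero]
  have hqK : q ∈ K := sum_mem fun v hv => smul_mem _ _ (subset_span hv)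
  have hxq : ⟪x, q⟫ ≤ 0 := by
    rw [inner_sum]
    exact sum_nonpos fun v hv => by
      rw [real_inner_smul_right]
      exact mul_nonpos_of_nonneg_of_nonpos (le_max_right _ _) (hx v hv)
  have hq : q = 0 := by
    have horth := K.starProjection_inner_eq_zero x q hqK
    rw [hqr, inner_sub_left, inner_add_left] at horth
    have := inner_sum_min_smul_sum_max_smul_nonneg hS f
    exact real_inner_self_nonpos.mp (by linarith)
  refine ⟨fun v => min (f v) 0, fun v => min_le_right _ _, fun v hv => hfS ?_, ?_⟩
  · rintro (h : f v = 0)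
    simp [h] at hv
  · rw [hqr, hq, zero_add]

end

theorem stmt_7_general {V : Type*} [NormedAddCommGroup V] [InnerProductSpace ℝ V]
    -- `Φ` is a crystallographic root system
    (Φ : Set V)
    (hrefl : ∀ α ∈ Φ, ∀ β ∈ Φ, β - (2 * ⟪β, α⟫ / ⟪α, α⟫) • α ∈ Φ)
    -- with base `Δ`
    (Δ : Finset V) (hΔΦ : (Δ : Set V) ⊆ Φ)
    (hli : LinearIndependent ℝ (fun x : Δ => (x : V)))
    (hbase : ∀ γ ∈ Φ, ∃ c : V → ℤ,
      γ = ∑ v ∈ Δ, (c v : ℝ) • v ∧ ((∀ v ∈ Δ, 0 ≤ c v) ∨ (∀ v ∈ Δ, c v ≤ 0)))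
    (S : Finset V) (hS : S ⊆ Δ) (β : V) (hβΔ : β ∈ Δ) (hβS : β ∉ S)
    (α : V)
    (hα : α = (Submodule.orthogonalProjectionOnto (Submodule.span ℝ (S : Set V))ᗮ β : V)) :
    ∃ c : V → ℝ, (∀ v ∈ Δ, 0 ≤ c v) ∧ α = ∑ v ∈ Δ, c v • v := by
  classical
  have hobtuse := pairwise_inner_nonpos_of_base hrefl hΔΦ hli hbase
  obtain ⟨f, hf_nonpos, hf_supp, hf⟩ := starProjection_span_eq_sum_nonpos_smul
    (hobtuse.mono (coe_subset.mpr hS))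
    fun v hv => hobtuse hβΔ (hS hv) (ne_of_mem_of_not_mem hv hβS).symm
  refine ⟨fun v => (if v = β then 1 else 0) - f v,
    fun v _ => sub_nonneg.mpr ((hf_nonpos v).trans (by split_ifs <;> norm_num)), ?_⟩
  have hfΔ : ∑ v ∈ S, f v • v = ∑ v ∈ Δ, f v • v :=
    sum_subset hS fun v _ hv => by rw [Function.notMem_support.mp (mt (@hf_supp v) hv), zero_smul]
  simp only [sub_smul, sum_sub_distrib, ite_smul, one_smul, zero_smul, sum_ite_eq', hβΔ, if_true]
  rw [hα, ← starProjection_apply, starProjection_orthogonal_val, hf, hfΔ]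

/-- The orthogonal projection of a simple root `β ∉ S` onto the orthogonal complement of
`span S` is a nonnegative linear combination of the simple roots. -/
theorem stmt_7 {V : Type*} [NormedAddCommGroup V] [InnerProductSpace ℝ V]
    [FiniteDimensional ℝ V]
    -- `Φ` is a crystallographic root system
    (Φ : Set V) (hfin : Φ.Finite) (h0 : (0 : V) ∉ Φ)
    (hrefl : ∀ α ∈ Φ, ∀ β ∈ Φ, β - (2 * ⟪β, α⟫ / ⟪α, α⟫) • α ∈ Φ)
    (hcrys : ∀ α ∈ Φ, ∀ β ∈ Φ, ∃ k : ℤ, 2 * ⟪β, α⟫ / ⟪α, α⟫ = (k : ℝ))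
    -- with base `Δ`
    (Δ : Finset V) (hΔΦ : (Δ : Set V) ⊆ Φ)
    (hli : LinearIndependent ℝ (fun x : Δ => (x : V)))
    (hbase : ∀ γ ∈ Φ, ∃ c : V → ℤ,
      γ = ∑ v ∈ Δ, (c v : ℝ) • v ∧ ((∀ v ∈ Δ, 0 ≤ c v) ∨ (∀ v ∈ Δ, c v ≤ 0)))
    (S : Finset V) (hS : S ⊆ Δ) (β : V) (hβΔ : β ∈ Δ) (hβS : β ∉ S)
    (α : V)
    (hα : α = (Submodule.orthogonalProjectionOnto (Submodule.span ℝ (S : Set V))ᗮ β : V)) :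
    ∃ c : V → ℝ, (∀ v ∈ Δ, 0 ≤ c v) ∧ α = ∑ v ∈ Δ, c v • v :=
  stmt_7_general Φ hrefl Δ hΔΦ hli hbase S hS β hβΔ hβS α hα
end

section
/- Let Φ be a crystallographic root system in a finite-dimensional real inner product space V with base Δ and Weyl group W, and let S, T ⊆ Δ. Let H ∈ V be orthogonal to every element of T and regular off span(T), i.e. ⟨β, H⟩ ≠ 0 for every root β ∈ Φ with β ∉ span(T). Let w ∈ W satisfy: wα is a positive root for every α ∈ S, w^{-1}α is a positive root for every α ∈ T, and w(span(S)) = span(T). Let w' ∈ W with w' ≠ w satisfy: w'α is a positive root for every α ∈ S and w'^{-1}α is a positive root for every α ∈ T. Then w'^{-1}H − w^{-1}H does not lie in the linear span of S. -/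
/-!
Put `σ = w w'⁻¹`. If `w'⁻¹H - w⁻¹H ∈ span S`, then `σH - H = w (w'⁻¹H - w⁻¹H)` lies in
`w (span S) = span T`, which is orthogonal to `H`; since `σ` is an isometry, `σH = H`.
So `σ` permutes the roots orthogonal to `H`, which are those of `span T`, and it keeps them
positive: `w'⁻¹` sends a positive root `β` of `span T` to a nonnegative combination of the
positive roots `w'⁻¹ T`, which lies in `span S` because `w` sends it to `σβ ∈ span T`, and `w`
does the same from `span S`. Hence `σ` preserves the chamber of `H + ερ`, where `ρ` is positive
on the positive roots and `ε > 0` is small. But the Weyl group acts simply transitively on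
chambers: it is generated by the simple reflections, a product of simple reflections moves any
regular vector into the dominant chamber, and one that keeps all positive roots positive is
trivial by the deletion argument. So `σ = 1`, i.e. `w' = w`.
-/

open scoped RealInnerProductSpace

/-- The Weyl group of `Φ`: the subgroup of the orthogonal group (realized as linear
isometry equivalences) generated by the reflections in the roots. -/
noncomputable def weylGroup (V : Type*) [NormedAddCommGroup V] [InnerProductSpace ℝ V]
    (Φ : Set V) : Subgroup (V ≃ₗᵢ[ℝ] V) :=
  Subgroup.closure {g | ∃ α ∈ Φ, ∀ x : V, g x = x - (2 * ⟪x, α⟫ / ⟪α, α⟫) • α}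

/-- A positive root: a root all of whose coefficients with respect to the base `Δ`
are nonnegative integers. -/
def isPositiveRoot {V : Type*} [NormedAddCommGroup V] [InnerProductSpace ℝ V]
    (Φ : Set V) (Δ : Finset V) (x : V) : Prop :=
  x ∈ Φ ∧ ∃ c : V → ℤ, x = ∑ v ∈ Δ, (c v : ℝ) • v ∧ ∀ v ∈ Δ, 0 ≤ c v

section Reflection

variable {V : Type*} [NormedAddCommGroup V] [InnerProductSpace ℝ V]

noncomputable def rootReflection (α : V) : V ≃ₗᵢ[ℝ] V := (ℝ ∙ α)ᗮ.reflection

theorem rootReflection_apply (α x : V) :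
    rootReflection α x = x - (2 * ⟪x, α⟫ / ⟪α, α⟫) • α := by
  rw [rootReflection, Submodule.reflection_orthogonal_apply, Submodule.reflection_singleton_apply,
    real_inner_self_eq_norm_sq, real_inner_comm]
  simp only [RCLike.ofReal_real_eq_id, id]
  module

@[simp]
theorem rootReflection_self (α : V) : rootReflection α α = -α :=
  Submodule.reflection_orthogonalComplement_singleton_eq_neg α

@[simp]
theorem rootReflection_rootReflection (α x : V) : rootReflection α (rootReflection α x) = x :=
  Submodule.reflection_reflection _ x

@[simp]
theorem rootReflection_mul_self (α : V) : rootReflection α * rootReflection α = 1 :=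
  Submodule.reflection_mul_reflection _

@[simp]
theorem rootReflection_inv (α : V) : (rootReflection α)⁻¹ = rootReflection α :=
  Submodule.reflection_inv

theorem inner_rootReflection_left (α x y : V) :
    ⟪rootReflection α x, y⟫ = ⟪x, rootReflection α y⟫ :=
  LinearIsometryEquiv.inner_map_eq_flip _ x y

theorem rootReflection_eq_of_mem_span_singleton {α β : V} (hβ : β ≠ 0) (h : β ∈ ℝ ∙ α) :
    rootReflection β = rootReflection α := by
  obtain ⟨t, rfl⟩ := Submodule.mem_span_singleton.1 h
  have ht : t ≠ 0 := by rintro rfl; simp at hβ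
  simp only [rootReflection, Submodule.span_singleton_smul_eq (IsUnit.mk0 t ht)]

theorem rootReflection_map (g : V ≃ₗᵢ[ℝ] V) (α : V) :
    rootReflection (g α) = g * rootReflection α * g⁻¹ := by
  ext x
  have hx : x = g (g⁻¹ x) := (g.apply_symm_apply x).symm
  conv_lhs => rw [hx]
  simp only [rootReflection_apply, LinearIsometryEquiv.coe_mul, Function.comp_apply,
    g.inner_map_map, map_sub, map_smul]

noncomputable def reflectionProd (l : List V) : V ≃ₗᵢ[ℝ] V := (l.map rootReflection).prod

@[simp]
theorem reflectionProd_nil : reflectionProd ([] : List V) = 1 := rfl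

@[simp]
theorem reflectionProd_cons (a : V) (l : List V) :
    reflectionProd (a :: l) = rootReflection a * reflectionProd l := by
  simp [reflectionProd]

@[simp]
theorem reflectionProd_append (l m : List V) :
    reflectionProd (l ++ m) = reflectionProd l * reflectionProd m := by
  simp [reflectionProd]

theorem reflectionProd_inv (l : List V) : (reflectionProd l)⁻¹ = reflectionProd l.reverse := by
  induction l with
  | nil => rfl
  | cons a l ih => simp [mul_inv_rev, ih]

theorem exists_eq_append_cons_of_not_reflectionProd {P : V → Prop} {x : V} (hx : P x) :
    ∀ {l : List V}, ¬ P (reflectionProd l x) → ∃ l₁ a l₂, l = l₁ ++ a :: l₂ ∧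
      P (reflectionProd l₂ x) ∧ ¬ P (rootReflection a (reflectionProd l₂ x))
  | [], h => absurd hx h
  | a :: l, h => by
    by_cases hl : P (reflectionProd l x)
    · exact ⟨[], a, l, rfl, hl, h⟩
    · obtain ⟨l₁, b, l₂, rfl, h₁, h₂⟩ := exists_eq_append_cons_of_not_reflectionProd hx hl
      exact ⟨a :: l₁, b, l₂, rfl, h₁, h₂⟩

theorem mapsTo_reflectionProd {Φ : Set V} (hΦ : ∀ α ∈ Φ, Set.MapsTo (rootReflection α) Φ Φ)
    {l : List V} (hl : ∀ a ∈ l, a ∈ Φ) : Set.MapsTo (reflectionProd l) Φ Φ := by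
  induction l with
  | nil => exact Set.mapsTo_id Φ
  | cons a l ih =>
    simp only [List.mem_cons, forall_eq_or_imp] at hl
    simpa using (hΦ a hl.1).comp (ih hl.2)

end Reflection

section DualFamily

variable {V : Type*} [NormedAddCommGroup V] [InnerProductSpace ℝ V]

theorem exists_forall_inner_eq {s : Finset V} (hs : LinearIndepOn ℝ id (s : Set V)) (f : V → ℝ) :
    ∃ ρ : V, ∀ α ∈ s, ⟪α, ρ⟫ = f α := by
  let b := Module.Basis.span hs.linearIndependent
  have : FiniteDimensional ℝ (Submodule.span ℝ (Set.range fun x : s => id (x : V))) :=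
    b.finiteDimensional_of_finite
  refine ⟨(InnerProductSpace.toDual ℝ (Submodule.span ℝ (Set.range fun x : s => id (x : V)))).symm
    (b.constr ℝ fun i => f i).toContinuousLinearMap, fun α hα => ?_⟩
  have hb : (b ⟨α, hα⟩ : V) = α := by rw [Module.Basis.span_apply]; rfl
  conv_lhs => rw [← hb, ← Submodule.coe_inner, real_inner_comm]
  exact InnerProductSpace.toDual_symm_apply.trans (b.constr_basis ℝ _ _)

open Classical in
/-- The coefficient of `v ∈ Δ` in a vector of `span Δ` is its inner product with `e v`. -/
def IsDualFamily (Δ : Finset V) (e : V → V) : Prop :=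
  ∀ u ∈ Δ, ∀ v ∈ Δ, ⟪u, e v⟫ = if u = v then 1 else 0

theorem exists_isDualFamily {Δ : Finset V} (hΔ : LinearIndepOn ℝ id (Δ : Set V)) :
    ∃ e : V → V, IsDualFamily Δ e := by
  classical
  choose e he using fun v => exists_forall_inner_eq hΔ fun u => if u = v then 1 else 0
  exact ⟨e, fun u hu v _ => he v u hu⟩

theorem IsDualFamily.inner_sum_smul {Δ T : Finset V} {e : V → V} (he : IsDualFamily Δ e)
    (hT : T ⊆ Δ) (f : V → ℝ) {v : V} (hv : v ∈ T) : ⟪∑ u ∈ T, f u • u, e v⟫ = f v := by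
  classical
  simp_rw [sum_inner, real_inner_smul_left]
  rw [Finset.sum_congr rfl fun u hu => by rw [he u (hT hu) v (hT hv), mul_ite, mul_one, mul_zero],
    Finset.sum_ite_eq', if_pos hv]

end DualFamily

section PositiveRoots

variable {V : Type*} [NormedAddCommGroup V] [InnerProductSpace ℝ V]

structure IsBasedRootSystem (Φ : Set V) (Δ : Finset V) : Prop where
  finite : Φ.Finite
  zero_notMem : (0 : V) ∉ Φ
  mapsTo_rootReflection : ∀ α ∈ Φ, Set.MapsTo (rootReflection α) Φ Φ
  base_subset : (Δ : Set V) ⊆ Φ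
  linearIndepOn : LinearIndepOn ℝ id (Δ : Set V)
  exists_coeff : ∀ γ ∈ Φ, ∃ c : V → ℤ,
    γ = ∑ v ∈ Δ, (c v : ℝ) • v ∧ ((∀ v ∈ Δ, 0 ≤ c v) ∨ (∀ v ∈ Δ, c v ≤ 0))

variable {Φ : Set V} {Δ : Finset V} {e : V → V} {α β v x : V}

theorem inner_nonneg_of_isPositiveRoot (hx : ∀ α ∈ Δ, 0 ≤ ⟪α, x⟫)
    (hβ : isPositiveRoot Φ Δ β) : 0 ≤ ⟪β, x⟫ := by
  obtain ⟨-, c, rfl, hc⟩ := hβ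
  rw [sum_inner]
  exact Finset.sum_nonneg fun v hv => by
    rw [real_inner_smul_left]
    exact mul_nonneg (by exact_mod_cast hc v hv) (hx v hv)

namespace IsBasedRootSystem

theorem ne_zero (hΦ : IsBasedRootSystem Φ Δ) (hβ : β ∈ Φ) : β ≠ 0 :=
  fun h => hΦ.zero_notMem (h ▸ hβ)

theorem neg_mem (hΦ : IsBasedRootSystem Φ Δ) (hβ : β ∈ Φ) : -β ∈ Φ := by
  simpa using hΦ.mapsTo_rootReflection β hβ hβ

theorem eq_sum_inner_smul (hΦ : IsBasedRootSystem Φ Δ) (he : IsDualFamily Δ e) (hβ : β ∈ Φ) :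
    β = ∑ v ∈ Δ, ⟪β, e v⟫ • v := by
  obtain ⟨c, hc, -⟩ := hΦ.exists_coeff β hβ
  conv_lhs => rw [hc]
  refine Finset.sum_congr rfl fun v hv => ?_
  rw [hc, he.inner_sum_smul subset_rfl _ hv]

theorem isPositiveRoot_iff (hΦ : IsBasedRootSystem Φ Δ) (he : IsDualFamily Δ e) (hβ : β ∈ Φ) :
    isPositiveRoot Φ Δ β ↔ ∀ v ∈ Δ, 0 ≤ ⟪β, e v⟫ := by
  constructor
  · rintro ⟨-, c, hc, hc0⟩ v hv
    rw [hc, he.inner_sum_smul subset_rfl _ hv]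
    exact_mod_cast hc0 v hv
  · intro h
    obtain ⟨c, hc, -⟩ := hΦ.exists_coeff β hβ
    refine ⟨hβ, c, hc, fun v hv => ?_⟩
    have hv' := h v hv
    rw [hc, he.inner_sum_smul subset_rfl _ hv] at hv'
    exact_mod_cast hv'

theorem exists_forall_inner_pos (hΦ : IsBasedRootSystem Φ Δ) :
    ∃ ρ : V, ∀ β, isPositiveRoot Φ Δ β → 0 < ⟪β, ρ⟫ := by
  obtain ⟨e, he⟩ := exists_isDualFamily hΦ.linearIndepOn
  refine ⟨∑ v ∈ Δ, e v, fun β hβ => ?_⟩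
  have hcoeff := (hΦ.isPositiveRoot_iff he hβ.1).1 hβ
  rw [inner_sum]
  refine (Finset.sum_nonneg hcoeff).lt_of_ne fun hsum => hΦ.ne_zero hβ.1 ?_
  rw [hΦ.eq_sum_inner_smul he hβ.1]
  exact Finset.sum_eq_zero fun v hv => by
    rw [(Finset.sum_eq_zero_iff_of_nonneg hcoeff).1 hsum.symm v hv, zero_smul]

theorem isPositiveRoot_or_neg (hΦ : IsBasedRootSystem Φ Δ) (hβ : β ∈ Φ) :
    isPositiveRoot Φ Δ β ∨ isPositiveRoot Φ Δ (-β) := by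
  obtain ⟨c, hc, hc0 | hc0⟩ := hΦ.exists_coeff β hβ
  · exact .inl ⟨hβ, c, hc, hc0⟩
  · refine .inr ⟨hΦ.neg_mem hβ, -c, ?_, fun v hv => neg_nonneg.2 (hc0 v hv)⟩
    simp [hc, Finset.sum_neg_distrib]

theorem not_isPositiveRoot_neg (hΦ : IsBasedRootSystem Φ Δ) (hβ : isPositiveRoot Φ Δ β) :
    ¬ isPositiveRoot Φ Δ (-β) := fun hneg => by
  obtain ⟨ρ, hρ⟩ := hΦ.exists_forall_inner_pos
  have h := hρ _ hneg
  rw [inner_neg_left] at h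
  linarith [hρ β hβ]

theorem isPositiveRoot_of_inner_pos (hΦ : IsBasedRootSystem Φ Δ) (he : IsDualFamily Δ e)
    (hβ : β ∈ Φ) (hv : v ∈ Δ) (h : 0 < ⟪β, e v⟫) : isPositiveRoot Φ Δ β :=
  (hΦ.isPositiveRoot_or_neg hβ).resolve_right fun hneg => by
    have hv' := (hΦ.isPositiveRoot_iff he (hΦ.neg_mem hβ)).1 hneg v hv
    rw [inner_neg_left] at hv'
    linarith

theorem isPositiveRoot_of_mem_base (hΦ : IsBasedRootSystem Φ Δ) (hα : α ∈ Δ) :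
    isPositiveRoot Φ Δ α := by
  obtain ⟨e, he⟩ := exists_isDualFamily hΦ.linearIndepOn
  refine (hΦ.isPositiveRoot_iff he (hΦ.base_subset hα)).2 fun v hv => ?_
  rw [he α hα v hv]
  split_ifs <;> norm_num

theorem pos_of_isPositiveRoot_smul (hΦ : IsBasedRootSystem Φ Δ) (hα : α ∈ Δ) {t : ℝ}
    (h : isPositiveRoot Φ Δ (t • α)) : 0 < t := by
  obtain ⟨e, he⟩ := exists_isDualFamily hΦ.linearIndepOn
  have ht := (hΦ.isPositiveRoot_iff he h.1).1 h α hα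
  rw [real_inner_smul_left, he α hα α hα, if_pos rfl, mul_one] at ht
  refine ht.lt_of_ne fun ht0 => hΦ.ne_zero h.1 ?_
  rw [← ht0, zero_smul]

theorem isPositiveRoot_rootReflection (hΦ : IsBasedRootSystem Φ Δ) (hα : α ∈ Δ)
    (hβ : isPositiveRoot Φ Δ β) (hβα : β ∉ ℝ ∙ α) : isPositiveRoot Φ Δ (rootReflection α β) := by
  obtain ⟨e, he⟩ := exists_isDualFamily hΦ.linearIndepOn
  have hβΦ := hβ.1
  obtain ⟨v, hv, hvα, hβv⟩ : ∃ v ∈ Δ, v ≠ α ∧ 0 < ⟪β, e v⟫ := by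
    by_contra! h
    apply hβα
    rw [hΦ.eq_sum_inner_smul he hβΦ, Finset.sum_eq_single_of_mem α hα fun v hv hvα => ?_]
    · exact Submodule.smul_mem _ _ (Submodule.mem_span_singleton_self α)
    · rw [le_antisymm (h v hv hvα) ((hΦ.isPositiveRoot_iff he hβΦ).1 hβ v hv), zero_smul]
  refine hΦ.isPositiveRoot_of_inner_pos he
    (hΦ.mapsTo_rootReflection α (hΦ.base_subset hα) hβΦ) hv ?_
  rwa [rootReflection_apply, inner_sub_left, real_inner_smul_left, he α hα v hv,
    if_neg hvα.symm, mul_zero, sub_zero]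

theorem isPositiveRoot_map_of_mem_span {F : Type*} [FunLike F V V] [LinearMapClass F ℝ V V]
    (hΦ : IsBasedRootSystem Φ Δ) {T : Finset V} (hT : T ⊆ Δ) {g : F} (hg : Set.MapsTo g Φ Φ)
    (hgT : ∀ a ∈ T, isPositiveRoot Φ Δ (g a)) (hβ : isPositiveRoot Φ Δ β)
    (hβT : β ∈ Submodule.span ℝ (T : Set V)) : isPositiveRoot Φ Δ (g β) := by
  obtain ⟨e, he⟩ := exists_isDualFamily hΦ.linearIndepOn
  obtain ⟨f, -, rfl⟩ := Submodule.mem_span_finset.1 hβT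
  have hf : ∀ a ∈ T, 0 ≤ f a := fun a ha => by
    simpa [he.inner_sum_smul hT f ha] using (hΦ.isPositiveRoot_iff he hβ.1).1 hβ a (hT ha)
  refine (hΦ.isPositiveRoot_iff he (hg hβ.1)).2 fun v hv => ?_
  rw [map_sum, sum_inner]
  refine Finset.sum_nonneg fun a ha => ?_
  rw [map_smul, real_inner_smul_left]
  exact mul_nonneg (hf a ha) ((hΦ.isPositiveRoot_iff he (hgT a ha).1).1 (hgT a ha) v hv)

theorem exists_mem_base_inner_pos (hΦ : IsBasedRootSystem Φ Δ) (hβ : isPositiveRoot Φ Δ β) :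
    ∃ α ∈ Δ, 0 < ⟪β, α⟫ := by
  by_contra! h
  have hββ := inner_nonneg_of_isPositiveRoot (x := -β)
    (fun α hα => by rw [inner_neg_right, real_inner_comm]; linarith [h α hα]) hβ
  rw [inner_neg_right, neg_nonneg] at hββ
  exact hΦ.ne_zero hβ.1 (real_inner_self_nonpos.1 hββ)

theorem isPositiveRoot_iff_inner_pos (hΦ : IsBasedRootSystem Φ Δ) {ρ : V}
    (hρ : ∀ β, isPositiveRoot Φ Δ β → 0 < ⟪β, ρ⟫) (hβ : β ∈ Φ) :
    isPositiveRoot Φ Δ β ↔ 0 < ⟪β, ρ⟫ :=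
  ⟨hρ β, fun h => (hΦ.isPositiveRoot_or_neg hβ).resolve_right fun hneg => by
    have := hρ _ hneg
    rw [inner_neg_left] at this
    linarith⟩

end IsBasedRootSystem

end PositiveRoots

section WeylGroup

variable {V : Type*} [NormedAddCommGroup V] [InnerProductSpace ℝ V]
variable {Φ : Set V} {Δ : Finset V} {β : V} {σ : V ≃ₗᵢ[ℝ] V}

namespace IsBasedRootSystem

/-- Induction on the height `⟪β, ρ⟫`: some simple reflection lowers the height of a positive
root that is not a multiple of a simple root, and conjugates its reflection to that of the
lower root. -/
theorem exists_word_rootReflection (hΦ : IsBasedRootSystem Φ Δ) (hβ : β ∈ Φ) :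
    ∃ l : List V, (∀ a ∈ l, a ∈ Δ) ∧ rootReflection β = reflectionProd l := by
  obtain ⟨ρ, hρ⟩ := hΦ.exists_forall_inner_pos
  suffices h : ∀ β ∈ Φ, isPositiveRoot Φ Δ β →
      ∃ l : List V, (∀ a ∈ l, a ∈ Δ) ∧ rootReflection β = reflectionProd l by
    rcases hΦ.isPositiveRoot_or_neg hβ with hpos | hneg
    · exact h β hβ hpos
    · rw [← rootReflection_eq_of_mem_span_singleton (neg_ne_zero.2 (hΦ.ne_zero hβ))
        (Submodule.neg_mem _ (Submodule.mem_span_singleton_self β))]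
      exact h (-β) (hΦ.neg_mem hβ) hneg
  intro γ hγ
  refine (Set.wellFoundedOn_image.1
    ((hΦ.finite.image fun β => ⟪β, ρ⟫).wellFoundedOn (r := (· < ·)))).induction
    (P := fun β => isPositiveRoot Φ Δ β →
      ∃ l : List V, (∀ a ∈ l, a ∈ Δ) ∧ rootReflection β = reflectionProd l)
    hγ fun β hβΦ ih hβ => ?_
  obtain ⟨α, hα, hβα⟩ := hΦ.exists_mem_base_inner_pos hβ
  by_cases hβα' : β ∈ ℝ ∙ α
  · exact ⟨[α], by simpa using hα,
      by simp [rootReflection_eq_of_mem_span_singleton (hΦ.ne_zero hβΦ) hβα']⟩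
  have hγ := hΦ.isPositiveRoot_rootReflection hα hβ hβα'
  have hγβ : ⟪rootReflection α β, ρ⟫ < ⟪β, ρ⟫ := by
    have hαρ := hρ α (hΦ.isPositiveRoot_of_mem_base hα)
    have hαα : 0 < ⟪α, α⟫ := real_inner_self_pos.2 (hΦ.ne_zero (hΦ.base_subset hα))
    have hk : 0 < 2 * ⟪β, α⟫ / ⟪α, α⟫ := by positivity
    rw [rootReflection_apply, inner_sub_left, real_inner_smul_left]
    nlinarith
  obtain ⟨l, hl, hγl⟩ := ih _ hγ.1 hγβ hγ
  refine ⟨α :: (l ++ [α]), by simpa [or_imp, forall_and, hα] using hl, ?_⟩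
  have hconj := rootReflection_map (rootReflection α) (rootReflection α β)
  rw [rootReflection_rootReflection] at hconj
  simp [hconj, hγl, mul_assoc]

theorem exists_word_of_mem_weylGroup (hΦ : IsBasedRootSystem Φ Δ) (hσ : σ ∈ weylGroup V Φ) :
    ∃ l : List V, (∀ a ∈ l, a ∈ Δ) ∧ σ = reflectionProd l := by
  induction hσ using Subgroup.closure_induction with
  | mem g hg =>
    obtain ⟨α, hα, hg⟩ := hg
    obtain ⟨l, hl, hαl⟩ := hΦ.exists_word_rootReflection hα
    exact ⟨l, hl, by ext x; rw [hg, ← rootReflection_apply, hαl]⟩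
  | one => exact ⟨[], by simp, rfl⟩
  | mul g h _ _ ihg ihh =>
    obtain ⟨l, hl, rfl⟩ := ihg
    obtain ⟨m, hm, rfl⟩ := ihh
    exact ⟨l ++ m, fun a ha => (List.mem_append.1 ha).elim (hl a) (hm a), by simp⟩
  | inv g _ ih =>
    obtain ⟨l, hl, rfl⟩ := ih
    exact ⟨l.reverse, by simpa using hl, reflectionProd_inv l⟩

theorem mapsTo_reflectionProd (hΦ : IsBasedRootSystem Φ Δ) {l : List V} (hl : ∀ a ∈ l, a ∈ Δ) :
    Set.MapsTo (reflectionProd l) Φ Φ :=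
  _root_.mapsTo_reflectionProd hΦ.mapsTo_rootReflection fun a ha => hΦ.base_subset (hl a ha)

theorem mapsTo_of_mem_weylGroup (hΦ : IsBasedRootSystem Φ Δ) (hσ : σ ∈ weylGroup V Φ) :
    Set.MapsTo σ Φ Φ := by
  obtain ⟨l, hl, rfl⟩ := hΦ.exists_word_of_mem_weylGroup hσ
  exact hΦ.mapsTo_reflectionProd hl

end IsBasedRootSystem

end WeylGroup

section Chambers

variable {V : Type*} [NormedAddCommGroup V] [InnerProductSpace ℝ V]
variable {Φ : Set V} {Δ : Finset V} {σ : V ≃ₗᵢ[ℝ] V} {μ : V}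

namespace IsBasedRootSystem

/-- Reflecting in a simple root `α` with `⟪α, μ⟫ < 0` decreases the number of positive roots
that are negative on `μ`. -/
theorem exists_word_dominant (hΦ : IsBasedRootSystem Φ Δ) (hμ : ∀ β ∈ Φ, ⟪β, μ⟫ ≠ 0) :
    ∃ l : List V, (∀ a ∈ l, a ∈ Δ) ∧
      ∀ β, isPositiveRoot Φ Δ β → 0 < ⟪β, reflectionProd l μ⟫ := by
  induction h : {β | isPositiveRoot Φ Δ β ∧ ⟪β, μ⟫ < 0}.ncard using Nat.strong_induction_on
    generalizing μ with
  | _ n ih =>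
  by_cases hdom : ∀ α ∈ Δ, 0 ≤ ⟪α, μ⟫
  · exact ⟨[], by simp, fun β hβ =>
      (inner_nonneg_of_isPositiveRoot hdom hβ).lt_of_ne (hμ β hβ.1).symm⟩
  push Not at hdom
  obtain ⟨α, hα, hαμ⟩ := hdom
  have hα' := hΦ.isPositiveRoot_of_mem_base hα
  have hμ' : ∀ β ∈ Φ, ⟪β, rootReflection α μ⟫ ≠ 0 := fun β hβ => by
    rw [← inner_rootReflection_left]
    exact hμ _ (hΦ.mapsTo_rootReflection α hα'.1 hβ)
  have hfin : {β | isPositiveRoot Φ Δ β ∧ ⟪β, μ⟫ < 0}.Finite :=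
    hΦ.finite.subset fun β hβ => hβ.1.1
  have hlt : {β | isPositiveRoot Φ Δ β ∧ ⟪β, rootReflection α μ⟫ < 0}.ncard < n := by
    rw [← h]
    refine (Set.ncard_le_ncard_of_injOn (rootReflection α) ?_
      (rootReflection α).injective.injOn hfin.sdiff).trans_lt
      (Set.ncard_sdiff_singleton_lt_of_mem ⟨hα', hαμ⟩ hfin)
    rintro β ⟨hβ, hβμ⟩
    rw [← inner_rootReflection_left] at hβμ
    have hβα : β ∉ ℝ ∙ α := by
      intro hmem
      obtain ⟨t, rfl⟩ := Submodule.mem_span_singleton.1 hmem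
      have ht := hΦ.pos_of_isPositiveRoot_smul hα hβ
      rw [map_smul, rootReflection_self, real_inner_smul_left, inner_neg_left] at hβμ
      nlinarith
    refine ⟨⟨hΦ.isPositiveRoot_rootReflection hα hβ hβα, hβμ⟩, fun hβeq => ?_⟩
    have hβneg : β = -α := by
      rw [← rootReflection_rootReflection α β, Set.mem_singleton_iff.1 hβeq, rootReflection_self]
    exact hΦ.not_isPositiveRoot_neg hα' (hβneg ▸ hβ)
  obtain ⟨l, hl, hdom⟩ := ih _ hlt hμ' rfl
  exact ⟨l ++ [α], fun a ha => (List.mem_append.1 ha).elim (hl a) (by simp_all),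
    by simpa using hdom⟩

/-- Deletion argument: if the word `L ++ [b]` keeps every positive root positive, then `L` sends
the simple root `b` to a negative root. At the letter `a` of `L` where the image of `b` turns
negative, that image is a multiple of `a`, and then `s_a` and `s_b` cancel out of the word. -/
theorem reflectionProd_eq_one (hΦ : IsBasedRootSystem Φ Δ) {l : List V} (hl : ∀ a ∈ l, a ∈ Δ)
    (hpos : ∀ β, isPositiveRoot Φ Δ β → isPositiveRoot Φ Δ (reflectionProd l β)) :
    reflectionProd l = 1 := by
  induction h : l.length using Nat.strong_induction_on generalizing l with
  | _ n ih =>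
  rcases l.eq_nil_or_concat with rfl | ⟨L, b, rfl⟩
  · rfl
  rw [List.concat_eq_append] at hl hpos h ⊢
  have hb := hΦ.isPositiveRoot_of_mem_base (hl b (by simp))
  have hL : ¬ isPositiveRoot Φ Δ (reflectionProd L b) := fun hLb =>
    hΦ.not_isPositiveRoot_neg hLb (by simpa using hpos b hb)
  obtain ⟨m₁, a, m₂, rfl, hpos₂, hneg₂⟩ := exists_eq_append_cons_of_not_reflectionProd hb hL
  have hmem : reflectionProd m₂ b ∈ ℝ ∙ a := by
    by_contra hmem
    exact hneg₂ (hΦ.isPositiveRoot_rootReflection (hl a (by simp)) hpos₂ hmem)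
  have hcancel : rootReflection a * reflectionProd m₂ * rootReflection b = reflectionProd m₂ := by
    rw [← rootReflection_eq_of_mem_span_singleton (hΦ.ne_zero hpos₂.1) hmem, rootReflection_map]
    simp [mul_assoc]
  have heq : reflectionProd (m₁ ++ a :: m₂ ++ [b]) = reflectionProd (m₁ ++ m₂) := by
    simp only [reflectionProd_append, reflectionProd_cons, reflectionProd_nil, mul_one, mul_assoc]
    rw [← mul_assoc (rootReflection a), hcancel]
  rw [heq] at hpos ⊢
  exact ih _ (by simp at h ⊢; omega) (fun x hx => hl x (by simp at hx ⊢; tauto)) hpos rfl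

theorem eq_one_of_forall_inner_pos (hΦ : IsBasedRootSystem Φ Δ) (hσ : σ ∈ weylGroup V Φ)
    (hμ : ∀ β ∈ Φ, ⟪β, μ⟫ ≠ 0) (hσμ : ∀ β ∈ Φ, 0 < ⟪β, μ⟫ → 0 < ⟪σ β, μ⟫) : σ = 1 := by
  obtain ⟨u, hu, hdom⟩ := hΦ.exists_word_dominant hμ
  obtain ⟨l, hl, rfl⟩ := hΦ.exists_word_of_mem_weylGroup hσ
  set τ := reflectionProd u
  have hτ : reflectionProd (u ++ l ++ u.reverse) = τ * reflectionProd l * τ⁻¹ := by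
    simp [τ, reflectionProd_inv, mul_assoc]
  have hword : ∀ a ∈ u ++ l ++ u.reverse, a ∈ Δ := by
    simp only [List.mem_append, List.mem_reverse]
    rintro a ((ha | ha) | ha) <;> simp_all
  have hconj : reflectionProd (u ++ l ++ u.reverse) = 1 := by
    refine hΦ.reflectionProd_eq_one hword fun β hβ => ?_
    have hγ : τ⁻¹ β ∈ Φ := by
      rw [reflectionProd_inv]
      exact hΦ.mapsTo_reflectionProd (by simpa using hu) hβ.1
    have hγμ : 0 < ⟪τ⁻¹ β, μ⟫ := by
      rw [← τ.inner_map_map]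
      simpa using hdom β hβ
    refine (hΦ.isPositiveRoot_iff_inner_pos hdom (hΦ.mapsTo_reflectionProd hword hβ.1)).2 ?_
    rw [hτ]
    simpa using hσμ _ hγ hγμ
  rwa [hτ, mul_inv_eq_one, mul_eq_left] at hconj

end IsBasedRootSystem

end Chambers

section FixedVector

variable {V : Type*} [NormedAddCommGroup V] [InnerProductSpace ℝ V]
variable {Φ : Set V} {Δ : Finset V} {σ : V ≃ₗᵢ[ℝ] V} {H : V}

open Filter Topology

theorem LinearIsometryEquiv.apply_eq_self_of_inner_sub_eq_zero (g : V ≃ₗᵢ[ℝ] V)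
    (h : ⟪g H - H, H⟫ = 0) : g H = H := by
  have hgH := g.inner_map_map H H
  rw [inner_sub_left] at h
  have h0 : ⟪g H - H, g H - H⟫ = 0 := by
    rw [inner_sub_left, inner_sub_right, inner_sub_right, hgH, real_inner_comm (g H) H]
    linarith
  exact sub_eq_zero.1 (inner_self_eq_zero.1 h0)

theorem inner_eq_zero_of_mem_span {s : Set V} {x : V} (hs : ∀ α ∈ s, ⟪H, α⟫ = 0)
    (hx : x ∈ Submodule.span ℝ s) : ⟪x, H⟫ = 0 := by
  have hxH : x ∈ (ℝ ∙ H)ᗮ := Submodule.span_le.2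
    (fun α hα => Submodule.mem_orthogonal_singleton_iff_inner_right.2 (hs α hα)) hx
  rwa [Submodule.mem_orthogonal_singleton_iff_inner_right, real_inner_comm] at hxH

theorem LinearIsometryEquiv.inner_map_of_map_eq_self (g : V ≃ₗᵢ[ℝ] V) (hH : g H = H) (x : V) :
    ⟪g x, H⟫ = ⟪x, H⟫ := by
  rw [← g.inner_map_map x H, hH]

namespace IsBasedRootSystem

/-- Take `μ = H + ε ρ` with `ρ` positive on the positive roots and `ε > 0` small. -/
theorem exists_regular_inner_pos_iff (hΦ : IsBasedRootSystem Φ Δ) (H : V) :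
    ∃ μ : V, (∀ β ∈ Φ, ⟪β, μ⟫ ≠ 0) ∧
      ∀ β ∈ Φ, (0 < ⟪β, μ⟫ ↔ 0 < ⟪β, H⟫ ∨ ⟪β, H⟫ = 0 ∧ isPositiveRoot Φ Δ β) := by
  obtain ⟨ρ, hρ⟩ := hΦ.exists_forall_inner_pos
  have hev : ∀ᶠ ε in 𝓝 (0 : ℝ), ∀ β ∈ {β ∈ Φ | ⟪β, H⟫ ≠ 0},
      0 < ⟪β, H⟫ * (⟪β, H⟫ + ε * ⟪β, ρ⟫) := by
    refine (hΦ.finite.subset (Set.sep_subset _ _)).eventually_all.2 fun β hβ => ?_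
    have hcont : Continuous fun ε : ℝ => ⟪β, H⟫ * (⟪β, H⟫ + ε * ⟪β, ρ⟫) := by fun_prop
    exact hcont.continuousAt.eventually (lt_mem_nhds (by simpa using mul_self_pos.2 hβ.2))
  obtain ⟨ε, hεβ, hε⟩ :=
    ((hev.filter_mono (nhdsWithin_le_nhds (s := Set.Ioi 0))).and self_mem_nhdsWithin).exists
  have hsign : ∀ β ∈ Φ, ⟪β, H + ε • ρ⟫ ≠ 0 ∧
      (0 < ⟪β, H + ε • ρ⟫ ↔ 0 < ⟪β, H⟫ ∨ ⟪β, H⟫ = 0 ∧ isPositiveRoot Φ Δ β) := by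
    intro β hβ
    rw [inner_add_right, real_inner_smul_right]
    by_cases hβH : ⟪β, H⟫ = 0
    · have hβρ : ⟪β, ρ⟫ ≠ 0 := by
        rcases hΦ.isPositiveRoot_or_neg hβ with hpos | hneg
        · exact (hρ β hpos).ne'
        · have := hρ _ hneg
          rw [inner_neg_left] at this
          linarith
      simp only [hβH, zero_add, lt_irrefl, false_or, true_and,
        hΦ.isPositiveRoot_iff_inner_pos hρ hβ]
      exact ⟨mul_ne_zero (ne_of_gt hε) hβρ, mul_pos_iff_of_pos_left hε⟩
    · have h := hεβ β ⟨hβ, hβH⟩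
      simp only [hβH, false_and, or_false]
      exact ⟨right_ne_zero_of_mul h.ne', (pos_iff_pos_of_mul_pos h).symm⟩
  exact ⟨H + ε • ρ, fun β hβ => (hsign β hβ).1, fun β hβ => (hsign β hβ).2⟩

theorem eq_one_of_apply_eq_self (hΦ : IsBasedRootSystem Φ Δ) (hσ : σ ∈ weylGroup V Φ)
    (hσH : σ H = H)
    (hpos : ∀ β, isPositiveRoot Φ Δ β → ⟪β, H⟫ = 0 → isPositiveRoot Φ Δ (σ β)) : σ = 1 := by
  obtain ⟨μ, hμ, hμH⟩ := hΦ.exists_regular_inner_pos_iff H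
  refine hΦ.eq_one_of_forall_inner_pos hσ hμ fun β hβ hβμ => ?_
  rw [hμH _ (hΦ.mapsTo_of_mem_weylGroup hσ hβ), σ.inner_map_of_map_eq_self hσH]
  rw [hμH β hβ] at hβμ
  exact hβμ.imp_right fun h => ⟨h.1, hpos β h.2 h.1⟩

end IsBasedRootSystem

end FixedVector

theorem stmt_9_general {V : Type*} [NormedAddCommGroup V] [InnerProductSpace ℝ V]
    -- `Φ` is a crystallographic root system
    (Φ : Set V) (hfin : Φ.Finite) (h0 : (0 : V) ∉ Φ)
    (hrefl : ∀ α ∈ Φ, ∀ β ∈ Φ, β - (2 * ⟪β, α⟫ / ⟪α, α⟫) • α ∈ Φ)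
    -- with base `Δ`
    (Δ : Finset V) (hΔΦ : (Δ : Set V) ⊆ Φ)
    (hli : LinearIndependent ℝ (fun x : Δ => (x : V)))
    (hbase : ∀ γ ∈ Φ, ∃ c : V → ℤ,
      γ = ∑ v ∈ Δ, (c v : ℝ) • v ∧ ((∀ v ∈ Δ, 0 ≤ c v) ∨ (∀ v ∈ Δ, c v ≤ 0)))
    (S T : Finset V) (hS : S ⊆ Δ) (hT : T ⊆ Δ)
    -- `H` is orthogonal to `T` and regular off `span T`
    (H : V) (hHT : ∀ α ∈ T, ⟪H, α⟫ = 0)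
    (hreg : ∀ β ∈ Φ, β ∉ Submodule.span ℝ (T : Set V) → ⟪β, H⟫ ≠ 0)
    (w w' : V ≃ₗᵢ[ℝ] V) (hw : w ∈ weylGroup V Φ) (hw' : w' ∈ weylGroup V Φ)
    (hwS : ∀ α ∈ S, isPositiveRoot Φ Δ (w α))
    (hwspan : w '' (Submodule.span ℝ (S : Set V) : Set V) =
      (Submodule.span ℝ (T : Set V) : Set V))
    (hne : w' ≠ w)
    (hw'T : ∀ α ∈ T, isPositiveRoot Φ Δ (w'⁻¹ α)) :
    w'⁻¹ H - w⁻¹ H ∉ Submodule.span ℝ (S : Set V) := by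
  have hΦ : IsBasedRootSystem Φ Δ :=
    ⟨hfin, h0, fun α hα β hβ => by rw [rootReflection_apply]; exact hrefl α hα β hβ, hΔΦ, hli,
      hbase⟩
  have hspan : ∀ β ∈ Φ, ⟪β, H⟫ = 0 → β ∈ Submodule.span ℝ (T : Set V) :=
    fun β hβ hβH => by_contra fun hβT => hreg β hβ hβT hβH
  have hST : ∀ x, w x ∈ Submodule.span ℝ (T : Set V) → x ∈ Submodule.span ℝ (S : Set V) :=
    fun x hx => w.injective.mem_set_image.1 (hwspan ▸ hx)
  intro hmem
  have hσ : w * w'⁻¹ ∈ weylGroup V Φ := mul_mem hw (inv_mem hw')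
  have hσH : (w * w'⁻¹) H = H := by
    refine (w * w'⁻¹).apply_eq_self_of_inner_sub_eq_zero (inner_eq_zero_of_mem_span hHT ?_)
    have hσH' : (w * w'⁻¹) H - H = w (w'⁻¹ H - w⁻¹ H) := by simp
    rw [hσH', ← SetLike.mem_coe, ← hwspan]
    exact Set.mem_image_of_mem w hmem
  refine hne (mul_inv_eq_one.1 (hΦ.eq_one_of_apply_eq_self hσ hσH fun β hβ hβH => ?_)).symm
  have hw'β := hΦ.isPositiveRoot_map_of_mem_span hT (hΦ.mapsTo_of_mem_weylGroup (inv_mem hw'))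
    hw'T hβ (hspan β hβ.1 hβH)
  show isPositiveRoot Φ Δ (w (w'⁻¹ β))
  refine hΦ.isPositiveRoot_map_of_mem_span hS (hΦ.mapsTo_of_mem_weylGroup hw) hwS hw'β
    (hST _ (hspan _ (hΦ.mapsTo_of_mem_weylGroup hσ hβ.1) ?_))
  exact ((w * w'⁻¹).inner_map_of_map_eq_self hσH β).trans hβH

/-- For a regular element `H` and distinct Weyl elements `w' ≠ w` as in the lemma on
meromorphic continuation of intertwining operators, `w'⁻¹H − w⁻¹H ∉ span S`. -/
theorem stmt_9 {V : Type*} [NormedAddCommGroup V] [InnerProductSpace ℝ V]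
    [FiniteDimensional ℝ V]
    -- `Φ` is a crystallographic root system
    (Φ : Set V) (hfin : Φ.Finite) (h0 : (0 : V) ∉ Φ)
    (hrefl : ∀ α ∈ Φ, ∀ β ∈ Φ, β - (2 * ⟪β, α⟫ / ⟪α, α⟫) • α ∈ Φ)
    (hcrys : ∀ α ∈ Φ, ∀ β ∈ Φ, ∃ k : ℤ, 2 * ⟪β, α⟫ / ⟪α, α⟫ = (k : ℝ))
    -- with base `Δ`
    (Δ : Finset V) (hΔΦ : (Δ : Set V) ⊆ Φ)
    (hli : LinearIndependent ℝ (fun x : Δ => (x : V)))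
    (hbase : ∀ γ ∈ Φ, ∃ c : V → ℤ,
      γ = ∑ v ∈ Δ, (c v : ℝ) • v ∧ ((∀ v ∈ Δ, 0 ≤ c v) ∨ (∀ v ∈ Δ, c v ≤ 0)))
    (S T : Finset V) (hS : S ⊆ Δ) (hT : T ⊆ Δ)
    -- `H` is orthogonal to `T` and regular off `span T`
    (H : V) (hHT : ∀ α ∈ T, ⟪H, α⟫ = 0)
    (hreg : ∀ β ∈ Φ, β ∉ Submodule.span ℝ (T : Set V) → ⟪β, H⟫ ≠ 0)
    (w w' : V ≃ₗᵢ[ℝ] V) (hw : w ∈ weylGroup V Φ) (hw' : w' ∈ weylGroup V Φ)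
    (hwS : ∀ α ∈ S, isPositiveRoot Φ Δ (w α))
    (hwT : ∀ α ∈ T, isPositiveRoot Φ Δ (w⁻¹ α))
    (hwspan : w '' (Submodule.span ℝ (S : Set V) : Set V) =
      (Submodule.span ℝ (T : Set V) : Set V))
    (hne : w' ≠ w)
    (hw'S : ∀ α ∈ S, isPositiveRoot Φ Δ (w' α))
    (hw'T : ∀ α ∈ T, isPositiveRoot Φ Δ (w'⁻¹ α)) :
    w'⁻¹ H - w⁻¹ H ∉ Submodule.span ℝ (S : Set V) :=
  stmt_9_general Φ hfin h0 hrefl Δ hΔΦ hli hbase S T hS hT H hHT hreg w w' hw hw' hwS hwspan hne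
    hw'T
end

section
/- Fix s ∈ ℂ and let 𝔙_s be the set of all functions f : (0,∞) → ℂ such that D_{a₂}^{1−s}(D_{a₁}^{s} f) = 0 for all a₁, a₂ > 0. If s ≠ 1/2, then 𝔙_s = {y ↦ α·y^s + β·y^{1−s} : α, β ∈ ℂ} (with no regularity assumption on f). If s = 1/2, then the set of continuous elements of 𝔙_s equals {y ↦ α·y^{1/2} + β·y^{1/2}·log y : α, β ∈ ℂ}. -/
/-!
At `y = 1` the defining relation reads
`f (a₁ a₂) - a₁ ^ s f a₂ - a₂ ^ (1 - s) f a₁ + a₂ ^ (1 - s) a₁ ^ s f 1 = 0`.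

For `s ≠ 1/2`, writing it for `(a₁, a₂) = (y, b)` and `(b, y)` and subtracting expresses
`(b ^ s - b ^ (1 - s)) f y` as a combination of `y ^ s` and `y ^ (1 - s)`; some `b > 0` has
`b ^ s ≠ b ^ (1 - s)`, because `b ↦ b ^ (2s - 1)` has derivative `2s - 1 ≠ 0` at `b = 1`.

For `s = 1/2`, dividing by `(a₁ a₂) ^ (1/2)` shows that `ψ y = f y / y ^ (1/2) - f 1` turns
products into sums. When `f` is continuous, `t ↦ ψ (exp t)` is a continuous additive map
`ℝ → ℂ`, hence `ℝ`-linear, so `ψ` is a multiple of `log`.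
-/

/-- The difference operator `(D_a^w f)(y) = f (a y) − a^w f (y)` on functions on `(0,∞)`. -/
noncomputable def Dop (a : ℝ) (w : ℂ) (f : ℝ → ℂ) : ℝ → ℂ :=
  fun y => f (a * y) - (a : ℂ) ^ w * f y

/-- The space of functions annihilated by all `D_{a₂}^{1-s} D_{a₁}^{s}`, `a₁, a₂ > 0`,
on `(0,∞)`. -/
def solSpace (s : ℂ) : Set (ℝ → ℂ) :=
  {f | ∀ a₁ : ℝ, 0 < a₁ → ∀ a₂ : ℝ, 0 < a₂ → ∀ y : ℝ, 0 < y →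
    Dop a₂ (1 - s) (Dop a₁ s f) y = 0}

open Complex Set

lemma ofReal_mul_cpow_of_nonneg {x y : ℝ} (hx : 0 ≤ x) (hy : 0 ≤ y) (r : ℂ) :
    ((x * y : ℝ) : ℂ) ^ r = (x : ℂ) ^ r * (y : ℂ) ^ r := by
  rw [ofReal_mul, mul_cpow_ofReal_nonneg hx hy]

lemma ofReal_cpow_ne_zero {y : ℝ} (hy : y ≠ 0) (r : ℂ) : (y : ℂ) ^ r ≠ 0 :=
  cpow_ne_zero_iff.mpr (.inl (ofReal_ne_zero.mpr hy))

lemma continuousOn_ofReal_cpow_const (r : ℂ) :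
    ContinuousOn (fun y : ℝ => (y : ℂ) ^ r) (Ioi 0) := fun y hy =>
  (continuousAt_ofReal_cpow_const y r (.inr (ne_of_gt hy))).continuousWithinAt

lemma exists_ofReal_cpow_ne_one {r : ℂ} (hr : r ≠ 0) : ∃ b : ℝ, 0 < b ∧ (b : ℂ) ^ r ≠ 1 := by
  by_contra! h
  have hconst : (fun b : ℝ => (b : ℂ) ^ r) =ᶠ[nhds 1] fun _ => 1 :=
    Filter.eventually_of_mem (Ioi_mem_nhds one_pos) h
  have hderiv := (hasDerivAt_ofReal_cpow_const one_ne_zero hr).congr_of_eventuallyEq hconst.symm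
  simpa [hr] using hderiv.unique (hasDerivAt_const (1 : ℝ) (1 : ℂ))

lemma exists_ofReal_cpow_ne_cpow {w z : ℂ} (h : w ≠ z) :
    ∃ b : ℝ, 0 < b ∧ (b : ℂ) ^ w ≠ (b : ℂ) ^ z := by
  obtain ⟨b, hb, hne⟩ := exists_ofReal_cpow_ne_one (sub_ne_zero.mpr h)
  refine ⟨b, hb, fun heq => hne ?_⟩
  rw [cpow_sub _ _ (ofReal_ne_zero.mpr hb.ne'), heq, div_self (ofReal_cpow_ne_zero hb.ne' z)]

lemma eq_log_smul_of_map_mul {E : Type*} [NormedAddCommGroup E] [NormedSpace ℝ E] {ψ : ℝ → E}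
    (hψ : ContinuousOn ψ (Ioi 0)) (hmul : ∀ x y, 0 < x → 0 < y → ψ (x * y) = ψ x + ψ y)
    {y : ℝ} (hy : 0 < y) : ψ y = Real.log y • ψ (Real.exp 1) := by
  let Φ : ℝ →+ E := AddMonoidHom.mk' (fun t => ψ (Real.exp t)) fun a b => by
    simp only [Real.exp_add]; exact hmul _ _ (Real.exp_pos a) (Real.exp_pos b)
  have hΦ : Continuous Φ := hψ.comp_continuous Real.continuous_exp Real.exp_pos
  calc ψ y = Φ (Real.log y • 1) := by simp [Φ, Real.exp_log hy]
    _ = Real.log y • ψ (Real.exp 1) := map_real_smul Φ hΦ _ _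

lemma Dop_Dop_apply (a₁ a₂ : ℝ) (w₁ w₂ : ℂ) (f : ℝ → ℂ) (y : ℝ) :
    Dop a₂ w₂ (Dop a₁ w₁ f) y =
      f (a₁ * (a₂ * y)) - (a₁ : ℂ) ^ w₁ * f (a₂ * y) - (a₂ : ℂ) ^ w₂ * f (a₁ * y)
        + (a₂ : ℂ) ^ w₂ * (a₁ : ℂ) ^ w₁ * f y := by
  simp only [Dop]; ring

lemma relation_of_mem_solSpace {s : ℂ} {f : ℝ → ℂ} (hf : f ∈ solSpace s) {a₁ a₂ : ℝ}
    (h₁ : 0 < a₁) (h₂ : 0 < a₂) :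
    f (a₁ * a₂) - (a₁ : ℂ) ^ s * f a₂ - (a₂ : ℂ) ^ (1 - s) * f a₁
      + (a₂ : ℂ) ^ (1 - s) * (a₁ : ℂ) ^ s * f 1 = 0 := by
  simpa only [Dop_Dop_apply, mul_one] using hf a₁ h₁ a₂ h₂ 1 one_pos

lemma eq_cpow_add_cpow_of_mem_solSpace {s : ℂ} (hs : s ≠ 1 / 2) {f : ℝ → ℂ}
    (hf : f ∈ solSpace s) :
    ∃ α β : ℂ, ∀ y : ℝ, 0 < y → f y = α * (y : ℂ) ^ s + β * (y : ℂ) ^ (1 - s) := by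
  obtain ⟨b, hb, hne⟩ := exists_ofReal_cpow_ne_cpow (w := s) (z := 1 - s)
    fun h => hs (by linear_combination h / 2)
  have hden : (b : ℂ) ^ s - (b : ℂ) ^ (1 - s) ≠ 0 := sub_ne_zero.mpr hne
  refine ⟨(f b - (b : ℂ) ^ (1 - s) * f 1) / ((b : ℂ) ^ s - (b : ℂ) ^ (1 - s)),
    ((b : ℂ) ^ s * f 1 - f b) / ((b : ℂ) ^ s - (b : ℂ) ^ (1 - s)), fun y hy => ?_⟩
  have hyb := relation_of_mem_solSpace hf hy hb
  have hby := relation_of_mem_solSpace hf hb hy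
  rw [mul_comm b y] at hby
  rw [div_mul_eq_mul_div, div_mul_eq_mul_div, ← add_div, eq_div_iff hden]
  linear_combination hyb - hby

lemma mem_solSpace_of_eq_cpow_add_cpow {s α β : ℂ} {f : ℝ → ℂ}
    (h : ∀ y : ℝ, 0 < y → f y = α * (y : ℂ) ^ s + β * (y : ℂ) ^ (1 - s)) :
    f ∈ solSpace s := by
  intro a₁ h₁ a₂ h₂ y hy
  rw [Dop_Dop_apply, h _ (by positivity), h _ (by positivity), h _ (by positivity), h y hy]
  simp only [ofReal_mul_cpow_of_nonneg h₁.le (mul_pos h₂ hy).le,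
    ofReal_mul_cpow_of_nonneg h₂.le hy.le, ofReal_mul_cpow_of_nonneg h₁.le hy.le]
  ring

lemma eq_cpow_half_add_log_of_mem_solSpace {f : ℝ → ℂ} (hf : f ∈ solSpace (1 / 2))
    (hc : ContinuousOn f (Ioi 0)) :
    ∃ α β : ℂ, ∀ y : ℝ, 0 < y →
      f y = α * (y : ℂ) ^ ((1 : ℂ) / 2) + β * (y : ℂ) ^ ((1 : ℂ) / 2) * Real.log y := by
  set ψ : ℝ → ℂ := fun y => f y / (y : ℂ) ^ ((1 : ℂ) / 2) - f 1 with hψ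
  have hmul : ∀ x y, 0 < x → 0 < y → ψ (x * y) = ψ x + ψ y := by
    intro x y hx hy
    have hrel := relation_of_mem_solSpace hf hx hy
    have hx₀ := ofReal_cpow_ne_zero hx.ne' ((1 : ℂ) / 2)
    have hy₀ := ofReal_cpow_ne_zero hy.ne' ((1 : ℂ) / 2)
    rw [show (1 : ℂ) - 1 / 2 = 1 / 2 by norm_num] at hrel
    simp only [hψ, ofReal_mul_cpow_of_nonneg hx.le hy.le]
    field_simp
    linear_combination hrel
  have hψc : ContinuousOn ψ (Ioi 0) :=
    (hc.div (continuousOn_ofReal_cpow_const _) fun y hy => ofReal_cpow_ne_zero hy.ne' _).sub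
      continuousOn_const
  refine ⟨f 1, ψ (Real.exp 1), fun y hy => ?_⟩
  have hlog := eq_log_smul_of_map_mul hψc hmul hy
  generalize ψ (Real.exp 1) = c at hlog
  rw [real_smul, hψ, sub_eq_iff_eq_add, div_eq_iff (ofReal_cpow_ne_zero hy.ne' _)] at hlog
  linear_combination hlog

lemma mem_solSpace_of_eq_cpow_half_add_log {α β : ℂ} {f : ℝ → ℂ}
    (h : ∀ y : ℝ, 0 < y →
      f y = α * (y : ℂ) ^ ((1 : ℂ) / 2) + β * (y : ℂ) ^ ((1 : ℂ) / 2) * Real.log y) :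
    f ∈ solSpace (1 / 2) := by
  intro a₁ h₁ a₂ h₂ y hy
  rw [Dop_Dop_apply, show (1 : ℂ) - 1 / 2 = 1 / 2 by norm_num,
    h _ (by positivity), h _ (by positivity), h _ (by positivity), h y hy,
    ofReal_mul_cpow_of_nonneg h₁.le (mul_pos h₂ hy).le, ofReal_mul_cpow_of_nonneg h₂.le hy.le,
    ofReal_mul_cpow_of_nonneg h₁.le hy.le, Real.log_mul h₁.ne' (mul_pos h₂ hy).ne',
    Real.log_mul h₂.ne' hy.ne', Real.log_mul h₁.ne' hy.ne']
  push_cast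
  ring

lemma continuousOn_of_eq_cpow_half_add_log {α β : ℂ} {f : ℝ → ℂ}
    (h : ∀ y : ℝ, 0 < y →
      f y = α * (y : ℂ) ^ ((1 : ℂ) / 2) + β * (y : ℂ) ^ ((1 : ℂ) / 2) * Real.log y) :
    ContinuousOn f (Ioi 0) := by
  have hlog : ContinuousOn (fun y : ℝ => ((Real.log y : ℝ) : ℂ)) (Ioi 0) :=
    continuous_ofReal.comp_continuousOn (Real.continuousOn_log.mono fun _ hy => ne_of_gt hy)
  have hpow := continuousOn_ofReal_cpow_const ((1 : ℂ) / 2)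
  exact ((continuousOn_const.mul hpow).add ((continuousOn_const.mul hpow).mul hlog)).congr h

theorem stmt_19 (s : ℂ) :
    (s ≠ 1 / 2 →
      solSpace s = {f : ℝ → ℂ | ∃ α β : ℂ, ∀ y : ℝ, 0 < y →
        f y = α * (y : ℂ) ^ s + β * (y : ℂ) ^ (1 - s)}) ∧
    (s = 1 / 2 →
      {f ∈ solSpace s | ContinuousOn f (Set.Ioi 0)} =
        {f : ℝ → ℂ | ∃ α β : ℂ, ∀ y : ℝ, 0 < y →
          f y = α * (y : ℂ) ^ ((1 : ℂ) / 2) + β * (y : ℂ) ^ ((1 : ℂ) / 2) * Real.log y}) := by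
  refine ⟨fun hs => ?_, ?_⟩
  · ext f
    exact ⟨eq_cpow_add_cpow_of_mem_solSpace hs,
      fun ⟨_, _, h⟩ => mem_solSpace_of_eq_cpow_add_cpow h⟩
  · rintro rfl
    ext f
    exact ⟨fun ⟨hf, hc⟩ => eq_cpow_half_add_log_of_mem_solSpace hf hc, fun ⟨_, _, h⟩ =>
      ⟨mem_solSpace_of_eq_cpow_half_add_log h, continuousOn_of_eq_cpow_half_add_log h⟩⟩
end
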